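/- arXiv:1707.08138 — 5 statements merged into one kernel-verified Lean document; each statement's English description precedes it below -/
import Mathlib

section
/- For all integers n ≥ k ≥ 1, the associated factorial numbers satisfy the recurrence A_{n,≥k} = (n-1)·A_{n-1,≥k} + ( (n-1)! / (n-k)! ) · A_{n-k,≥k}, where (n-1)!/(n-k)! is the falling factorial (n-1)(n-2)···(n-k+1). -/
/-- The restricted Bell number `B_{n,≤m}`: the number of partitions of an `n`-element set
into nonempty blocks each of size at most `m`. -/
noncomputable def restrictedBell (n m : ℕ) : ℕ :=
  Nat.card {P : Finpartition (Finset.univ : Finset (Fin n)) // ∀ b ∈ P.parts, b.card ≤ m}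

/-- The associated Bell number `B_{n,≥m}`: the number of partitions of an `n`-element set
into nonempty blocks each of size at least `m`. -/
noncomputable def associatedBell (n m : ℕ) : ℕ :=
  Nat.card {P : Finpartition (Finset.univ : Finset (Fin n)) // ∀ b ∈ P.parts, m ≤ b.card}

/-- The Bell number `B_n`: the number of partitions of an `n`-element set. -/
noncomputable def bell (n : ℕ) : ℕ :=
  Nat.card (Finpartition (Finset.univ : Finset (Fin n)))

/-- The restricted factorial number `A_{n,≤m}`: the number of permutations of `n` elements
all of whose cycles have length at most `m`. -/
noncomputable def restrictedFactorial (n m : ℕ) : ℕ :=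
  Nat.card {σ : Equiv.Perm (Fin n) // ∀ x, Function.minimalPeriod σ x ≤ m}

/-- The associated factorial number `A_{n,≥m}`: the number of permutations of `n` elements
all of whose cycles have length at least `m`. -/
noncomputable def associatedFactorial (n m : ℕ) : ℕ :=
  Nat.card {σ : Equiv.Perm (Fin n) // ∀ x, m ≤ Function.minimalPeriod σ x}

set_option linter.unusedSectionVars false

namespace AFRec


open Equiv Equiv.Perm Function

variable {α : Type*} {β : Type*}

lemma isPeriodicPt_iff (σ : Equiv.Perm α) (n : ℕ) (x : α) :
    IsPeriodicPt σ n x ↔ (σ ^ n) x = x := by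
  rw [IsPeriodicPt, IsFixedPt, Equiv.Perm.iterate_eq_pow]

lemma mem_periodicPts [Finite α] (σ : Equiv.Perm α) (x : α) : x ∈ periodicPts σ :=
  ⟨orderOf σ, orderOf_pos σ, by
    rw [IsPeriodicPt, IsFixedPt, Equiv.Perm.iterate_eq_pow, pow_orderOf_eq_one]; rfl⟩

lemma one_le_mp [Finite α] (σ : Equiv.Perm α) (x : α) : 1 ≤ minimalPeriod σ x :=
  minimalPeriod_pos_of_mem_periodicPts (mem_periodicPts σ x)

lemma mp_pow_apply [Finite α] (σ : Equiv.Perm α) (n : ℕ) (x : α) :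
    minimalPeriod σ ((σ ^ n) x) = minimalPeriod σ x := by
  have := minimalPeriod_apply_iterate (mem_periodicPts σ x) n
  rwa [Equiv.Perm.iterate_eq_pow] at this

lemma mp_sameCycle [Finite α] {σ : Equiv.Perm α} {x y : α} (h : σ.SameCycle x y) :
    minimalPeriod σ y = minimalPeriod σ x := by
  obtain ⟨n, -, -, rfl⟩ := h.exists_pow_eq''
  exact mp_pow_apply σ n x

lemma permCongr_pow_apply (e : α ≃ β) (σ : Equiv.Perm α) (n : ℕ) :
    ∀ x, ((e.permCongr σ) ^ n) (e x) = e ((σ ^ n) x) := by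
  induction n with
  | zero => intro x; simp
  | succ n ih =>
    intro x
    rw [pow_succ, pow_succ, Equiv.Perm.mul_apply, Equiv.Perm.mul_apply,
      Equiv.permCongr_apply, Equiv.symm_apply_apply, ih]

lemma mp_permCongr (e : α ≃ β) (σ : Equiv.Perm α) (x : α) :
    minimalPeriod (e.permCongr σ) (e x) = minimalPeriod σ x := by
  rw [minimalPeriod_eq_minimalPeriod_iff]
  intro n
  rw [isPeriodicPt_iff, isPeriodicPt_iff, permCongr_pow_apply]
  exact ⟨fun h => e.injective h, fun h => by rw [h]⟩

lemma sameCycle_permCongr [Finite α] (e : α ≃ β) (σ : Equiv.Perm α) (x y : α) :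
    (e.permCongr σ).SameCycle (e x) (e y) ↔ σ.SameCycle x y := by
  have : Finite β := Finite.of_equiv α e
  constructor
  · intro h
    obtain ⟨n, -, -, hn⟩ := h.exists_pow_eq''
    refine ⟨n, ?_⟩
    rw [zpow_natCast]
    apply e.injective
    rw [← permCongr_pow_apply, hn]
  · intro h
    obtain ⟨n, -, -, hn⟩ := h.exists_pow_eq''
    exact ⟨n, by rw [zpow_natCast, permCongr_pow_apply, hn]⟩

section OfSubtype
variable {p : α → Prop} [DecidablePred p]

lemma ofSubtype_pow_apply_coe (ρ : Equiv.Perm (Subtype p)) (n : ℕ) (x : Subtype p) :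
    ((Equiv.Perm.ofSubtype ρ) ^ n) (x : α) = ((ρ ^ n) x : α) := by
  rw [← map_pow, Equiv.Perm.ofSubtype_apply_coe]

lemma mp_ofSubtype_coe (ρ : Equiv.Perm (Subtype p)) (x : Subtype p) :
    minimalPeriod (Equiv.Perm.ofSubtype ρ) (x : α) = minimalPeriod ρ x := by
  rw [minimalPeriod_eq_minimalPeriod_iff]
  intro n
  rw [isPeriodicPt_iff, isPeriodicPt_iff, ofSubtype_pow_apply_coe]
  exact Subtype.coe_inj

end OfSubtype

lemma sameCycle_of_fixed {σ : Equiv.Perm α} {a x : α} (ha : σ a = a)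
    (h : σ.SameCycle a x) : x = a := by
  obtain ⟨i, hi⟩ := h
  rw [Equiv.Perm.zpow_apply_eq_self_of_apply_eq_self ha] at hi
  exact hi.symm

section Core
variable [Fintype α] [DecidableEq α] (a : α)

/-- insert `a` just before `b` in the cycle structure of `τ`. -/
def ins (b : {x : α // x ≠ a}) (τ : Equiv.Perm {x : α // x ≠ a}) : Equiv.Perm α :=
  Equiv.swap a ↑b * Equiv.Perm.ofSubtype τ

lemma ins_apply_a (b : {x : α // x ≠ a}) (τ : Equiv.Perm {x : α // x ≠ a}) :
    ins a b τ a = ↑b := by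
  rw [ins, Equiv.Perm.mul_apply,
    Equiv.Perm.ofSubtype_apply_of_not_mem τ (not_not_intro rfl), Equiv.swap_apply_left]

lemma ins_apply_coe (b : {x : α // x ≠ a}) (τ : Equiv.Perm {x : α // x ≠ a})
    (x : {x : α // x ≠ a}) :
    ins a b τ ↑x = if τ x = b then a else ↑(τ x) := by
  rw [ins, Equiv.Perm.mul_apply, Equiv.Perm.ofSubtype_apply_coe]
  rcases eq_or_ne (τ x) b with h | h
  · rw [if_pos h, h, Equiv.swap_apply_right]
  · rw [if_neg h, Equiv.swap_apply_of_ne_of_ne (τ x).2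
      (fun hc => h (Subtype.coe_injective hc))]

lemma ins_pow_apply_a (b : {x : α // x ≠ a}) (τ : Equiv.Perm {x : α // x ≠ a}) :
    ∀ m, m < minimalPeriod τ b → ((ins a b τ) ^ (m + 1)) a = ↑((τ ^ m) b) := by
  intro m
  induction m with
  | zero => intro _; rw [pow_one, ins_apply_a, pow_zero]; rfl
  | succ m ih =>
    intro hm
    have h1 : τ ((τ ^ m) b) = (τ ^ (m + 1)) b := by
      rw [pow_succ', Equiv.Perm.mul_apply]
    have hne : τ ((τ ^ m) b) ≠ b := by
      rw [h1]
      intro hc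
      exact not_isPeriodicPt_of_pos_of_lt_minimalPeriod (Nat.succ_ne_zero m) hm
        ((isPeriodicPt_iff τ (m + 1) b).mpr hc)
    rw [pow_succ', Equiv.Perm.mul_apply, ih (Nat.lt_of_succ_lt hm), ins_apply_coe,
      if_neg hne, h1]

lemma mp_ins_a (b : {x : α // x ≠ a}) (τ : Equiv.Perm {x : α // x ≠ a}) :
    minimalPeriod (ins a b τ) a = minimalPeriod τ b + 1 := by
  have hP1 : 1 ≤ minimalPeriod τ b := one_le_mp τ b
  set P := minimalPeriod τ b with hP
  have hper : ((ins a b τ) ^ (P + 1)) a = a := by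
    have h2 : ((ins a b τ) ^ (P - 1 + 1)) a = ↑((τ ^ (P - 1)) b) :=
      ins_pow_apply_a a b τ _ (Nat.sub_lt hP1 one_pos)
    rw [show P - 1 + 1 = P by omega] at h2
    have h3 : τ ((τ ^ (P - 1)) b) = b := by
      have h4 : (τ ^ P) b = b := (isPeriodicPt_iff τ P b).mp (isPeriodicPt_minimalPeriod τ b)
      calc τ ((τ ^ (P - 1)) b) = (τ ^ (P - 1 + 1)) b := by rw [pow_succ', Equiv.Perm.mul_apply]
      _ = b := by rw [show P - 1 + 1 = P by omega]; exact h4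
    rw [pow_succ', Equiv.Perm.mul_apply, h2, ins_apply_coe, if_pos h3]
  refine le_antisymm
    (IsPeriodicPt.minimalPeriod_le (Nat.succ_pos _) ((isPeriodicPt_iff _ _ _).mpr hper)) ?_
  by_contra hlt
  push_neg at hlt
  have h1 : 1 ≤ minimalPeriod (ins a b τ) a := one_le_mp _ _
  set q := minimalPeriod (ins a b τ) a with hq
  have hqP : q - 1 < P := by omega
  have h5 := ins_pow_apply_a a b τ (q - 1) hqP
  rw [show q - 1 + 1 = q by omega] at h5
  have hfix : ((ins a b τ) ^ q) a = a :=
    (isPeriodicPt_iff _ _ _).mp (isPeriodicPt_minimalPeriod _ _)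
  rw [hfix] at h5
  exact ((τ ^ (q - 1)) b).2 h5.symm

lemma ins_pow_apply_coe (b : {x : α // x ≠ a}) (τ : Equiv.Perm {x : α // x ≠ a})
    (x : {x : α // x ≠ a}) (hx : ¬ τ.SameCycle b x) (m : ℕ) :
    ((ins a b τ) ^ m) ↑x = ↑((τ ^ m) x) := by
  induction m with
  | zero => simp
  | succ m ih =>
    have hne : τ ((τ ^ m) x) ≠ b := by
      intro hc
      exact hx (SameCycle.symm ⟨(m + 1 : ℕ), by
        rw [zpow_natCast, pow_succ', Equiv.Perm.mul_apply]; exact hc⟩)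
    rw [pow_succ', Equiv.Perm.mul_apply, ih, ins_apply_coe, if_neg hne,
      ← Equiv.Perm.mul_apply, ← pow_succ']

lemma mp_ins_coe (b : {x : α // x ≠ a}) (τ : Equiv.Perm {x : α // x ≠ a})
    (x : {x : α // x ≠ a}) (hx : ¬ τ.SameCycle b x) :
    minimalPeriod (ins a b τ) ↑x = minimalPeriod τ x := by
  rw [minimalPeriod_eq_minimalPeriod_iff]
  intro n
  rw [isPeriodicPt_iff, isPeriodicPt_iff, ins_pow_apply_coe a b τ x hx]
  exact Subtype.coe_inj

lemma ins_sameCycle (b : {x : α // x ≠ a}) (τ : Equiv.Perm {x : α // x ≠ a})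
    (x : {x : α // x ≠ a}) (h : τ.SameCycle b x) : (ins a b τ).SameCycle a ↑x := by
  obtain ⟨n, -, -, rfl⟩ := h.exists_pow_eq''
  have hP : 0 < minimalPeriod τ b := one_le_mp τ b
  have h1 : (τ ^ (n % minimalPeriod τ b)) b = (τ ^ n) b := by
    have := iterate_mod_minimalPeriod_eq (f := ⇑τ) (x := b) (n := n)
    rwa [Equiv.Perm.iterate_eq_pow, Equiv.Perm.iterate_eq_pow] at this
  refine ⟨(n % minimalPeriod τ b + 1 : ℕ), ?_⟩
  rw [zpow_natCast, ins_pow_apply_a a b τ _ (Nat.mod_lt n hP), h1]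

lemma ins_sameCycle_inv (b : {x : α // x ≠ a}) (τ : Equiv.Perm {x : α // x ≠ a})
    (x : α) (h : (ins a b τ).SameCycle a x) :
    x = a ∨ ∃ hx : x ≠ a, τ.SameCycle b ⟨x, hx⟩ := by
  obtain ⟨n, -, -, hn⟩ := h.exists_pow_eq''
  set σ := ins a b τ with hσ
  set Q := minimalPeriod σ a with hQdef
  have hQ : Q = minimalPeriod τ b + 1 := mp_ins_a a b τ
  have h1 : (σ ^ (n % Q)) a = (σ ^ n) a := by
    have := iterate_mod_minimalPeriod_eq (f := ⇑σ) (x := a) (n := n)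
    rwa [Equiv.Perm.iterate_eq_pow, Equiv.Perm.iterate_eq_pow] at this
  rcases Nat.eq_zero_or_pos (n % Q) with h0 | hpos
  · left
    rw [← hn, ← h1, h0, pow_zero]; rfl
  · right
    have h2 : n % Q - 1 < minimalPeriod τ b := by
      have := Nat.mod_lt n (show 0 < Q by omega)
      omega
    have h3 := ins_pow_apply_a a b τ (n % Q - 1) h2
    rw [show n % Q - 1 + 1 = n % Q by omega] at h3
    have hx : x = ↑((τ ^ (n % Q - 1)) b) := by rw [← hn, ← h1, h3]
    refine ⟨by rw [hx]; exact ((τ ^ (n % Q - 1)) b).2, ?_⟩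
    exact ⟨(n % Q - 1 : ℕ), by rw [zpow_natCast]; exact Subtype.ext hx.symm⟩

/-- remove `a` from the cycle structure of `σ`. -/
def rem (σ : Equiv.Perm α) : Equiv.Perm {x : α // x ≠ a} :=
  (Equiv.swap a (σ a) * σ).subtypePerm (fun x => by
    have hfa : (Equiv.swap a (σ a) * σ) a = a := by
      rw [Equiv.Perm.mul_apply, Equiv.swap_apply_right]
    constructor
    · intro hx hc
      exact hx (by rw [hc, hfa])
    · intro hx hc
      exact hx ((Equiv.swap a (σ a) * σ).injective (hc.trans hfa.symm)))

lemma ins_rem (σ : Equiv.Perm α) (hσ : σ a ≠ a) :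
    ins a ⟨σ a, hσ⟩ (rem a σ) = σ := by
  rw [ins, rem, Equiv.Perm.ofSubtype_subtypePerm _ (fun x hx => by
    intro hxa
    subst hxa
    exact hx (by rw [Equiv.Perm.mul_apply, Equiv.swap_apply_right]))]
  rw [← mul_assoc, Equiv.swap_mul_self, one_mul]

lemma rem_ins (b : {x : α // x ≠ a}) (τ : Equiv.Perm {x : α // x ≠ a}) :
    rem a (ins a b τ) = τ := by
  apply Equiv.ext
  intro x
  apply Subtype.ext
  show (Equiv.swap a (ins a b τ a) * ins a b τ) ↑x = ↑(τ x)
  rw [ins_apply_a, Equiv.Perm.mul_apply, ins, Equiv.Perm.mul_apply,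
    Equiv.Perm.ofSubtype_apply_coe, Equiv.swap_apply_self]

lemma ofSubtype_rem {σ : Equiv.Perm α} (hfa : σ a = a) :
    Equiv.Perm.ofSubtype (rem a σ) = σ := by
  rw [rem, Equiv.Perm.ofSubtype_subtypePerm _ (fun x hx => by
    intro hxa
    subst hxa
    exact hx (by rw [Equiv.Perm.mul_apply, Equiv.swap_apply_right]))]
  apply Equiv.ext
  intro x
  rw [Equiv.Perm.mul_apply, hfa, Equiv.swap_self]
  rfl

lemma rem_ofSubtype (τ : Equiv.Perm {x : α // x ≠ a}) :
    rem a (Equiv.Perm.ofSubtype τ) = τ := by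
  apply Equiv.ext
  intro x
  apply Subtype.ext
  show (Equiv.swap a (Equiv.Perm.ofSubtype τ a) * Equiv.Perm.ofSubtype τ) ↑x = ↑(τ x)
  rw [Equiv.Perm.mul_apply, Equiv.Perm.ofSubtype_apply_coe,
    Equiv.Perm.ofSubtype_apply_of_not_mem τ (not_not_intro rfl), Equiv.swap_self]
  rfl

end Core



def Pk (k : ℕ) (σ : Equiv.Perm α) : Prop := ∀ x, k ≤ minimalPeriod σ x

def Qpt (k : ℕ) (σ : Equiv.Perm α) (c : α) (j : ℕ) : Prop :=
  minimalPeriod σ c = j ∧ ∀ x, ¬ σ.SameCycle c x → k ≤ minimalPeriod σ x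

section Main
variable [Fintype α] [DecidableEq α] (k : ℕ) (a : α)

lemma qpt_ins_iff (b : {x : α // x ≠ a}) (τ : Equiv.Perm {x : α // x ≠ a}) (j : ℕ) :
    Qpt k (ins a b τ) a (j + 1) ↔ Qpt k τ b j := by
  constructor
  · rintro ⟨h1, h2⟩
    rw [mp_ins_a] at h1
    refine ⟨by omega, ?_⟩
    rintro ⟨x, hxa⟩ hx
    have hnc : ¬ (ins a b τ).SameCycle a x := by
      intro hc
      rcases ins_sameCycle_inv a b τ x hc with h | ⟨hx', hsc⟩
      · exact hxa h
      · exact hx hsc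
    have := h2 x hnc
    rwa [show x = ↑(⟨x, hxa⟩ : {x : α // x ≠ a}) from rfl,
      mp_ins_coe a b τ ⟨x, hxa⟩ hx] at this
  · rintro ⟨h1, h2⟩
    refine ⟨by rw [mp_ins_a, h1], ?_⟩
    intro x hxc
    have hxa : x ≠ a := by rintro rfl; exact hxc (SameCycle.refl _ _)
    have hnc : ¬ τ.SameCycle b ⟨x, hxa⟩ := fun hc => hxc (ins_sameCycle a b τ _ hc)
    have := h2 _ hnc
    rwa [← mp_ins_coe a b τ ⟨x, hxa⟩ hnc] at this

lemma pk_ins_iff (b : {x : α // x ≠ a}) (τ : Equiv.Perm {x : α // x ≠ a}) :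
    (Pk k (ins a b τ) ∧ k + 1 ≤ minimalPeriod (ins a b τ) a) ↔ Pk k τ := by
  have hmpa : minimalPeriod (ins a b τ) a = minimalPeriod τ b + 1 := mp_ins_a a b τ
  constructor
  · rintro ⟨h1, h2⟩ x
    rcases Classical.em (τ.SameCycle b x) with hc | hc
    · rw [mp_sameCycle hc]
      omega
    · rw [← mp_ins_coe a b τ x hc]
      exact h1 ↑x
  · intro h
    have hb := h b
    refine ⟨?_, by omega⟩
    intro x
    rcases eq_or_ne x a with rfl | hxa
    · omega
    · rcases Classical.em (τ.SameCycle b ⟨x, hxa⟩) with hc | hc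
      · have h3 := ins_sameCycle a b τ _ hc
        have h4 := mp_sameCycle h3
        rw [show ↑(⟨x, hxa⟩ : {x : α // x ≠ a}) = x from rfl] at h4
        omega
      · rw [show x = ↑(⟨x, hxa⟩ : {x : α // x ≠ a}) from rfl,
          mp_ins_coe a b τ _ hc]
        exact h ⟨x, hxa⟩

/-- the common removal/insertion equivalence. -/
def equivCore (P : Equiv.Perm α → Prop)
    (R : {x : α // x ≠ a} × Equiv.Perm {x : α // x ≠ a} → Prop)
    (hP : ∀ q, P (ins a q.1 q.2) ↔ R q) (hPa : ∀ σ, P σ → σ a ≠ a) :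
    {σ : Equiv.Perm α // P σ} ≃ {q : {x : α // x ≠ a} × Equiv.Perm {x : α // x ≠ a} // R q} where
  toFun s := ⟨(⟨s.1 a, hPa s.1 s.2⟩, rem a s.1),
    (hP _).mp (by rw [ins_rem a s.1 (hPa s.1 s.2)]; exact s.2)⟩
  invFun t := ⟨ins a t.1.1 t.1.2, (hP t.1).mpr t.2⟩
  left_inv s := Subtype.ext (ins_rem a s.1 (hPa s.1 s.2))
  right_inv t := Subtype.ext (Prod.ext
    (Subtype.ext (ins_apply_a a t.1.1 t.1.2)) (rem_ins a t.1.1 t.1.2))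

/-- fixed-point removal equivalence. -/
def equivA : {σ : Equiv.Perm α // Qpt k σ a 1} ≃
    {τ : Equiv.Perm {x : α // x ≠ a} // Pk k τ} where
  toFun s := ⟨rem a s.1, by
    have hfa : s.1 a = a := minimalPeriod_eq_one_iff_isFixedPt.mp s.2.1
    intro x
    have hnc : ¬ s.1.SameCycle a ↑x := fun hc => x.2 (sameCycle_of_fixed hfa hc)
    have := s.2.2 ↑x hnc
    rwa [← ofSubtype_rem a hfa, mp_ofSubtype_coe] at this⟩
  invFun t := ⟨Equiv.Perm.ofSubtype t.1, by
    have hfa : Equiv.Perm.ofSubtype t.1 a = a :=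
      Equiv.Perm.ofSubtype_apply_of_not_mem t.1 (not_not_intro rfl)
    refine ⟨minimalPeriod_eq_one_iff_isFixedPt.mpr hfa, ?_⟩
    intro x hx
    rcases eq_or_ne x a with rfl | hxa
    · exact absurd (SameCycle.refl _ _) hx
    · rw [show x = ↑(⟨x, hxa⟩ : {x : α // x ≠ a}) from rfl, mp_ofSubtype_coe]
      exact t.2 ⟨x, hxa⟩⟩
  left_inv s := Subtype.ext (ofSubtype_rem a (minimalPeriod_eq_one_iff_isFixedPt.mp s.2.1))
  right_inv t := Subtype.ext (rem_ofSubtype a t.1)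


lemma pk_of_qpt (σ : Equiv.Perm α) (h : Qpt k σ a k) : Pk k σ := by
  intro x
  rcases Classical.em (σ.SameCycle a x) with hc | hc
  · rw [mp_sameCycle hc, h.1]
  · exact h.2 x hc

lemma card_split :
    Nat.card {σ : Equiv.Perm α // Pk k σ} =
      Nat.card {σ : Equiv.Perm α // Qpt k σ a k} +
        Nat.card {σ : Equiv.Perm α // Pk k σ ∧ k + 1 ≤ minimalPeriod σ a} := by
  rw [← Nat.card_sum]
  refine Nat.card_congr
    ⟨fun s => if h : minimalPeriod s.1 a = k then Sum.inl ⟨s.1, h, fun x _ => s.2 x⟩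
        else Sum.inr ⟨s.1, s.2, lt_of_le_of_ne (s.2 a) (Ne.symm h)⟩,
      Sum.elim (fun s => ⟨s.1, pk_of_qpt k a s.1 s.2⟩) (fun s => ⟨s.1, s.2.1⟩), ?_, ?_⟩
  · intro s
    by_cases h : minimalPeriod s.1 a = k
    · simp only [dif_pos h]; rfl
    · simp only [dif_neg h]; rfl
  · rintro (⟨σ, hq⟩ | ⟨σ, hp⟩)
    · simp only [Sum.elim_inl, dif_pos hq.1]; exact dif_pos hq.1
    · have hne : minimalPeriod σ a ≠ k := by have := hp.2; omega
      simp only [Sum.elim_inr, dif_neg hne]; exact dif_neg hne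

end Main

section Transport
variable (k : ℕ)

lemma pk_permCongr (e : α ≃ β) (σ : Equiv.Perm α) : Pk k σ ↔ Pk k (e.permCongr σ) := by
  constructor
  · intro h y
    have := h (e.symm y)
    rwa [← mp_permCongr e σ (e.symm y), e.apply_symm_apply] at this
  · intro h x
    have := h (e x)
    rwa [mp_permCongr] at this

lemma qpt_permCongr [Finite α] (e : α ≃ β) (σ : Equiv.Perm α) (c : α) (j : ℕ) :
    Qpt k σ c j ↔ Qpt k (e.permCongr σ) (e c) j := by
  unfold Qpt
  rw [mp_permCongr]
  constructor
  · rintro ⟨h1, h2⟩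
    refine ⟨h1, fun y hy => ?_⟩
    have hy' : ¬ σ.SameCycle c (e.symm y) := fun hc => hy (by
      have := (sameCycle_permCongr e σ c (e.symm y)).mpr hc
      rwa [e.apply_symm_apply] at this)
    have := h2 _ hy'
    rwa [← mp_permCongr e σ (e.symm y), e.apply_symm_apply] at this
  · rintro ⟨h1, h2⟩
    refine ⟨h1, fun x hx => ?_⟩
    have hx' : ¬ (e.permCongr σ).SameCycle (e c) (e x) := fun hc =>
      hx ((sameCycle_permCongr e σ c x).mp hc)
    have := h2 _ hx'
    rwa [mp_permCongr] at this

noncomputable def Ncard (k j m : ℕ) : ℕ :=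
  Nat.card {q : Fin m × Equiv.Perm (Fin m) // Qpt k q.2 q.1 j}

lemma card_pk_eq [Fintype α] :
    Nat.card {σ : Equiv.Perm α // Pk k σ} = associatedFactorial (Fintype.card α) k :=
  Nat.card_congr (Equiv.subtypeEquiv (Fintype.equivFin α).permCongr
    (fun σ => pk_permCongr k (Fintype.equivFin α) σ))

lemma card_qpt_eq [Fintype α] (j : ℕ) :
    Nat.card {q : α × Equiv.Perm α // Qpt k q.2 q.1 j} = Ncard k j (Fintype.card α) :=
  Nat.card_congr (Equiv.subtypeEquiv
    (Equiv.prodCongr (Fintype.equivFin α) (Fintype.equivFin α).permCongr)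
    (fun q => qpt_permCongr k (Fintype.equivFin α) q.2 q.1 j))

lemma card_qpt_sum [Fintype α] (j : ℕ) :
    Nat.card {q : α × Equiv.Perm α // Qpt k q.2 q.1 j}
      = ∑ c : α, Nat.card {σ : Equiv.Perm α // Qpt k σ c j} := by
  classical
  rw [Nat.card_congr (Equiv.subtypeProdEquivSigmaSubtype
    (fun (c : α) (σ : Equiv.Perm α) => Qpt k σ c j))]
  letI : ∀ c : α, Fintype {σ : Equiv.Perm α // Qpt k σ c j} := fun _ => Fintype.ofFinite _
  rw [Nat.card_eq_fintype_card, Fintype.card_sigma]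
  exact Finset.sum_congr rfl fun c _ => (Nat.card_eq_fintype_card).symm

def prodSubtypeSnd {γ δ : Type*} {p : δ → Prop} : {q : γ × δ // p q.2} ≃ γ × {d // p d} where
  toFun s := (s.1.1, ⟨s.1.2, s.2⟩)
  invFun t := ⟨(t.1, t.2.1), t.2.2⟩
  left_inv _ := rfl
  right_inv _ := rfl

lemma card_ne [Fintype α] [DecidableEq α] (a : α) :
    Fintype.card {x : α // x ≠ a} = Fintype.card α - 1 := by
  classical
  have h1 : Fintype.card {x : α // ¬ x = a} = Fintype.card α - Fintype.card {x : α // x = a} :=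
    Fintype.card_subtype_compl _
  rw [Fintype.card_subtype_eq] at h1
  exact h1

lemma card_qpt_step [Fintype α] [DecidableEq α] (a : α) (j : ℕ) (hj : 1 ≤ j) :
    Nat.card {σ : Equiv.Perm α // Qpt k σ a (j + 1)} = Ncard k j (Fintype.card α - 1) := by
  have hPa : ∀ σ : Equiv.Perm α, Qpt k σ a (j + 1) → σ a ≠ a := by
    intro σ h hc
    have h3 : minimalPeriod σ a = 1 := minimalPeriod_eq_one_iff_isFixedPt.mpr hc
    have h4 := h.1
    omega
  calc Nat.card {σ : Equiv.Perm α // Qpt k σ a (j + 1)}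
      = Nat.card {q : {x : α // x ≠ a} × Equiv.Perm {x : α // x ≠ a} // Qpt k q.2 q.1 j} :=
        Nat.card_congr (equivCore a _ _ (fun q => qpt_ins_iff k a q.1 q.2 j) hPa)
    _ = Ncard k j (Fintype.card {x : α // x ≠ a}) := card_qpt_eq k j
    _ = Ncard k j (Fintype.card α - 1) := by rw [card_ne a]

lemma card_qpt_one [Fintype α] [DecidableEq α] (a : α) :
    Nat.card {σ : Equiv.Perm α // Qpt k σ a 1} = associatedFactorial (Fintype.card α - 1) k := by
  calc Nat.card {σ : Equiv.Perm α // Qpt k σ a 1}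
      = Nat.card {τ : Equiv.Perm {x : α // x ≠ a} // Pk k τ} := Nat.card_congr (equivA k a)
    _ = associatedFactorial (Fintype.card {x : α // x ≠ a}) k := card_pk_eq k
    _ = associatedFactorial (Fintype.card α - 1) k := by rw [card_ne a]

lemma ncard_one (m : ℕ) : Ncard k 1 m = m * associatedFactorial (m - 1) k := by
  have h0 : Ncard k 1 m = ∑ c : Fin m, Nat.card {σ : Equiv.Perm (Fin m) // Qpt k σ c 1} :=
    card_qpt_sum k 1
  rw [h0, Finset.sum_congr rfl (fun c _ => by rw [card_qpt_one k c, Fintype.card_fin]),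
    Finset.sum_const, Finset.card_univ, Fintype.card_fin, smul_eq_mul]

lemma ncard_step (j m : ℕ) (hj : 1 ≤ j) : Ncard k (j + 1) m = m * Ncard k j (m - 1) := by
  have h0 : Ncard k (j + 1) m
      = ∑ c : Fin m, Nat.card {σ : Equiv.Perm (Fin m) // Qpt k σ c (j + 1)} :=
    card_qpt_sum k (j + 1)
  rw [h0, Finset.sum_congr rfl (fun c _ => by rw [card_qpt_step k c j hj, Fintype.card_fin]),
    Finset.sum_const, Finset.card_univ, Fintype.card_fin, smul_eq_mul]

lemma ncard_formula : ∀ (j : ℕ), 1 ≤ j → ∀ m,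
    Ncard k j m = m.descFactorial j * associatedFactorial (m - j) k := by
  intro j
  induction j with
  | zero => omega
  | succ j ih =>
    intro _ m
    rcases Nat.eq_zero_or_pos j with rfl | hj'
    · rw [ncard_one, Nat.descFactorial_one]
    · rw [ncard_step k j m hj', ih hj' (m - 1)]
      rcases Nat.eq_zero_or_pos m with rfl | hm
      · simp
      · obtain ⟨m', rfl⟩ : ∃ m', m = m' + 1 := ⟨m - 1, by omega⟩
        rw [Nat.succ_descFactorial_succ, Nat.add_sub_cancel,
          show m' + 1 - (j + 1) = m' - j by omega]
        ring

end Transport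

end AFRec


/-- `A_{n,≥k} = (n-1)·A_{n-1,≥k} + (n-1)(n-2)···(n-k+1)·A_{n-k,≥k}` for `n ≥ k ≥ 1`,
where `(n-1)(n-2)···(n-k+1) = (n-1)!/(n-k)!` is the falling factorial, expressed here as
`Nat.descFactorial (n-1) (k-1)`. -/
theorem associatedFactorial_recurrence (n k : ℕ) (hk : 1 ≤ k) (hn : k ≤ n) :
    associatedFactorial n k =
      (n - 1) * associatedFactorial (n - 1) k +
        (n - 1).descFactorial (k - 1) * associatedFactorial (n - k) k := by
  rcases Nat.lt_or_ge k 2 with hk2 | hk2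
  · have hk1 : k = 1 := by omega
    subst hk1
    have hA : ∀ m, associatedFactorial m 1 = m.factorial := by
      intro m
      show Nat.card {σ : Equiv.Perm (Fin m) // ∀ x, 1 ≤ Function.minimalPeriod σ x}
        = m.factorial
      rw [Nat.card_congr (Equiv.subtypeUnivEquiv (fun σ => fun x => AFRec.one_le_mp σ x)),
        Nat.card_eq_fintype_card, Fintype.card_perm, Fintype.card_fin]
    simp only [hA]
    obtain ⟨n', rfl⟩ : ∃ n', n = n' + 1 := ⟨n - 1, by omega⟩
    simp only [Nat.add_sub_cancel, Nat.sub_self, Nat.descFactorial_zero]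
    rw [Nat.factorial_succ]
    ring
  · have hn1 : 1 ≤ n := le_trans hk hn
    set a : Fin n := ⟨0, hn1⟩ with ha
    have hstart : associatedFactorial n k
        = Nat.card {σ : Equiv.Perm (Fin n) // AFRec.Pk k σ} := rfl
    rw [hstart, AFRec.card_split k a]
    obtain ⟨j, hj⟩ : ∃ j, k = j + 1 := ⟨k - 1, by omega⟩
    have hj1 : 1 ≤ j := by omega
    have h1 : Nat.card {σ : Equiv.Perm (Fin n) // AFRec.Qpt k σ a k} =
        (n - 1).descFactorial (k - 1) * associatedFactorial (n - k) k := by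
      calc Nat.card {σ : Equiv.Perm (Fin n) // AFRec.Qpt k σ a k}
          = Nat.card {σ : Equiv.Perm (Fin n) // AFRec.Qpt k σ a (j + 1)} := by rw [← hj]
        _ = AFRec.Ncard k j (Fintype.card (Fin n) - 1) := AFRec.card_qpt_step k a j hj1
        _ = AFRec.Ncard k j (n - 1) := by rw [Fintype.card_fin]
        _ = (n - 1).descFactorial j * associatedFactorial (n - 1 - j) k :=
            AFRec.ncard_formula k j hj1 (n - 1)
        _ = (n - 1).descFactorial (k - 1) * associatedFactorial (n - k) k := by
            rw [show k - 1 = j by omega, show n - 1 - j = n - k by omega]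
    have hPa : ∀ σ : Equiv.Perm (Fin n),
        (AFRec.Pk k σ ∧ k + 1 ≤ Function.minimalPeriod σ a) → σ a ≠ a := by
      intro σ h hc
      have h3 : Function.minimalPeriod σ a = 1 :=
        Function.minimalPeriod_eq_one_iff_isFixedPt.mpr hc
      have h4 := h.2
      omega
    have h2 : Nat.card {σ : Equiv.Perm (Fin n) //
          AFRec.Pk k σ ∧ k + 1 ≤ Function.minimalPeriod σ a}
        = (n - 1) * associatedFactorial (n - 1) k := by
      rw [Nat.card_congr ((AFRec.equivCore a _ _
        (fun q => AFRec.pk_ins_iff k a q.1 q.2) hPa).trans AFRec.prodSubtypeSnd)]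
      rw [Nat.card_prod, Nat.card_eq_fintype_card, AFRec.card_ne a, Fintype.card_fin]
      rw [AFRec.card_pk_eq k, AFRec.card_ne a, Fintype.card_fin]
    rw [h1, h2, Nat.add_comm]
end

section
/- For every integer m ≥ 1, the sequence (B_{n,≤m})_{n≥0} is log-convex, i.e. B_{n,≤m} · B_{n+2,≤m} ≥ (B_{n+1,≤m})² for all n ≥ 0, and the sequence (B_{n,≤m}/n!)_{n≥0} is log-concave, i.e. (B_{n,≤m}/n!)·(B_{n+2,≤m}/(n+2)!) ≤ (B_{n+1,≤m}/(n+1)!)² for all n ≥ 0. -/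
open Finset

namespace RBAux

variable {α β : Type*} [DecidableEq α] [DecidableEq β]

/-- Map a finpartition of `s` along an embedding. -/
def pmap (f : α ↪ β) {s : Finset α} (P : Finpartition s) : Finpartition (s.map f) where
  parts := P.parts.map (Finset.mapEmbedding f).toEmbedding
  supIndep := by
    rw [Finset.supIndep_iff_pairwiseDisjoint]
    rintro x hx y hy hne
    simp only [Finset.coe_map, Set.mem_image, Finset.mem_coe, RelEmbedding.coe_toEmbedding,
      Finset.mapEmbedding_apply] at hx hy
    obtain ⟨u, hu, rfl⟩ := hx
    obtain ⟨v, hv, rfl⟩ := hy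
    have huv : u ≠ v := by rintro rfl; exact hne rfl
    have := P.disjoint hu hv huv
    simp only [Function.onFun, id] at this ⊢
    exact (Finset.disjoint_map f).mpr this
  sup_parts := by
    ext b
    simp only [Finset.mem_sup, Finset.mem_map, RelEmbedding.coe_toEmbedding,
      Finset.mapEmbedding_apply, id]
    constructor
    · rintro ⟨v, ⟨u, hu, rfl⟩, hb⟩
      rw [Finset.mem_map] at hb
      obtain ⟨a, ha, rfl⟩ := hb
      exact ⟨a, P.le hu ha, rfl⟩
    · rintro ⟨a, ha, rfl⟩
      obtain ⟨t, ht, hat⟩ := P.exists_mem ha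
      exact ⟨t.map f, ⟨t, ht, rfl⟩, Finset.mem_map_of_mem f hat⟩
  bot_notMem := by
    simp only [Finset.bot_eq_empty, Finset.mem_map, RelEmbedding.coe_toEmbedding,
      Finset.mapEmbedding_apply]
    rintro ⟨u, hu, h⟩
    rw [Finset.map_eq_empty] at h
    subst h
    exact P.bot_notMem hu

@[simp] lemma parts_pmap (f : α ↪ β) {s : Finset α} (P : Finpartition s) :
    (pmap f P).parts = P.parts.map (Finset.mapEmbedding f).toEmbedding := rfl

lemma pmap_injective (f : α ↪ β) {s : Finset α} :
    Function.Injective (pmap f (s := s)) := by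
  intro P Q h
  have : P.parts.map (Finset.mapEmbedding f).toEmbedding
      = Q.parts.map (Finset.mapEmbedding f).toEmbedding := congrArg Finpartition.parts h
  exact Finpartition.ext (Finset.map_injective _ this)

lemma pmap_surjective (f : α ↪ β) {s : Finset α} :
    Function.Surjective (pmap f (s := s)) := by
  intro Q
  have hsub : ∀ b ∈ Q.parts, (b.preimage f f.injective.injOn).map f = b := by
    intro b hb
    ext x
    simp only [Finset.mem_map, Finset.mem_preimage]
    constructor
    · rintro ⟨a, ha, rfl⟩; exact ha
    · intro hx
      have : x ∈ s.map f := Q.le hb hx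
      rw [Finset.mem_map] at this
      obtain ⟨a, _, rfl⟩ := this
      exact ⟨a, hx, rfl⟩
  refine ⟨⟨Q.parts.image (fun b => b.preimage f f.injective.injOn), ?_, ?_, ?_⟩, ?_⟩
  · rw [Finset.supIndep_iff_pairwiseDisjoint]
    rintro x hx y hy hne
    simp only [Finset.coe_image, Set.mem_image, Finset.mem_coe] at hx hy
    obtain ⟨u, hu, rfl⟩ := hx
    obtain ⟨v, hv, rfl⟩ := hy
    have huv : u ≠ v := by rintro rfl; exact hne rfl
    have hd := Q.disjoint hu hv huv
    simp only [Function.onFun, id] at hd ⊢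
    rw [Finset.disjoint_left] at hd ⊢
    intro a ha ha'
    rw [Finset.mem_preimage] at ha ha'
    exact hd ha ha'
  · ext a
    simp only [Finset.mem_sup, Finset.mem_image, id]
    constructor
    · rintro ⟨v, ⟨b, hb, rfl⟩, ha⟩
      rw [Finset.mem_preimage] at ha
      have : f a ∈ s.map f := Q.le hb ha
      rw [Finset.mem_map] at this
      obtain ⟨a', ha', he⟩ := this
      rwa [← f.injective he]
    · intro ha
      have : f a ∈ s.map f := Finset.mem_map_of_mem f ha
      obtain ⟨b, hb, hfb⟩ := Q.exists_mem this
      exact ⟨b.preimage f f.injective.injOn, ⟨b, hb, rfl⟩, by rwa [Finset.mem_preimage]⟩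
  · simp only [Finset.bot_eq_empty, Finset.mem_image]
    rintro ⟨b, hb, h⟩
    obtain ⟨x, hx⟩ := Q.nonempty_of_mem_parts hb
    have : x ∈ s.map f := Q.le hb hx
    rw [Finset.mem_map] at this
    obtain ⟨a, _, rfl⟩ := this
    have : a ∈ b.preimage f f.injective.injOn := by rwa [Finset.mem_preimage]
    rw [h] at this
    exact absurd this (Finset.notMem_empty a)
  · apply Finpartition.ext
    simp only [parts_pmap]
    ext b
    simp only [Finset.mem_map, RelEmbedding.coe_toEmbedding, Finset.mapEmbedding_apply,
      Finset.mem_image]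
    constructor
    · rintro ⟨v, ⟨c, hc, rfl⟩, rfl⟩
      rwa [hsub c hc]
    · intro hb
      exact ⟨b.preimage f f.injective.injOn, ⟨b, hb, rfl⟩, hsub b hb⟩


lemma card_subtype_parts_map (f : α ↪ β) (s : Finset α) (m : ℕ) :
    Nat.card {P : Finpartition (s.map f) // ∀ b ∈ P.parts, #b ≤ m}
      = Nat.card {P : Finpartition s // ∀ b ∈ P.parts, #b ≤ m} := by
  apply Nat.card_congr
  have hbij : Function.Bijective (pmap f (s := s)) := ⟨pmap_injective f, pmap_surjective f⟩
  refine Equiv.symm (Equiv.subtypeEquiv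
    (Equiv.ofBijective (pmap f) hbij) ?_)
  intro P
  simp only [Equiv.ofBijective_apply, parts_pmap, Finset.mem_map,
    RelEmbedding.coe_toEmbedding, Finset.mapEmbedding_apply]
  constructor
  · rintro h c ⟨u, hu, rfl⟩
    rw [Finset.card_map]
    exact h u hu
  · intro h u hu
    have := h (u.map f) ⟨u, hu, rfl⟩
    rwa [Finset.card_map] at this

lemma card_parts_eq_restrictedBell (t : Finset β) (m : ℕ) :
    Nat.card {P : Finpartition t // ∀ b ∈ P.parts, #b ≤ m} = restrictedBell #t m := by
  classical
  obtain ⟨f, hf⟩ : ∃ f : Fin #t ↪ β, Finset.univ.map f = t := by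
    refine ⟨t.equivFin.symm.toEmbedding.trans (Function.Embedding.subtype _), ?_⟩
    ext x
    simp only [Finset.mem_map, Finset.mem_univ, true_and, Function.Embedding.trans_apply,
      Equiv.coe_toEmbedding, Function.Embedding.coe_subtype]
    constructor
    · rintro ⟨i, rfl⟩; exact (t.equivFin.symm i).2
    · intro hx; exact ⟨t.equivFin ⟨x, hx⟩, by simp⟩
  rw [← hf, card_subtype_parts_map f Finset.univ m]
  have h2 : #(Finset.univ.map f) = #t := by rw [hf]
  rw [h2]
  rfl

variable {γ : Type*} [DecidableEq γ] [Fintype γ]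

lemma avoid_parts_erase (P : Finpartition (Finset.univ : Finset γ)) {b : Finset γ}
    (hb : b ∈ P.parts) : (P.avoid b).parts = P.parts.erase b := by
  ext c
  rw [Finpartition.mem_avoid, Finset.mem_erase]
  constructor
  · rintro ⟨d, hd, hdb, rfl⟩
    have hne : d ≠ b := by rintro rfl; exact hdb le_rfl
    have hdisj : Disjoint d b := P.disjoint hd hb hne
    rw [Finset.sdiff_eq_self_of_disjoint hdisj]
    exact ⟨hne, hd⟩
  · rintro ⟨hne, hc⟩
    have hdisj : Disjoint c b := P.disjoint hc hb hne
    refine ⟨c, hc, ?_, Finset.sdiff_eq_self_of_disjoint hdisj⟩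
    intro hle
    exact P.bot_notMem (hdisj.eq_bot_of_le hle ▸ hc)

def fiberEquiv (a0 : γ) (b : Finset γ) (hab : a0 ∈ b) (m : ℕ) (hbm : #b ≤ m) :
    {P : Finpartition (Finset.univ : Finset γ) //
        (∀ c ∈ P.parts, #c ≤ m) ∧ P.part a0 = b}
      ≃ {P : Finpartition ((Finset.univ : Finset γ) \ b) // ∀ c ∈ P.parts, #c ≤ m} where
  toFun P := ⟨P.1.avoid b, by
    intro c hc
    rw [Finpartition.mem_avoid] at hc
    obtain ⟨d, hd, -, rfl⟩ := hc
    exact le_trans (Finset.card_le_card Finset.sdiff_subset) (P.2.1 d hd)⟩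
  invFun P := ⟨P.1.extend (b := b)
      (by simpa [Finset.bot_eq_empty, ← Finset.nonempty_iff_ne_empty] using ⟨a0, hab⟩)
      Finset.sdiff_disjoint
      (by rw [Finset.sup_eq_union, Finset.sdiff_union_of_subset (Finset.subset_univ b)]),
    by
      constructor
      · intro c hc
        rw [Finpartition.extend_parts, Finset.mem_insert] at hc
        rcases hc with rfl | hc
        · exact hbm
        · exact P.2 c hc
      · refine Finpartition.part_eq_of_mem _ ?_ hab
        rw [Finpartition.extend_parts]
        exact Finset.mem_insert_self b _⟩
  left_inv P := by
    apply Subtype.ext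
    apply Finpartition.ext
    have hb : b ∈ P.1.parts := by
      have h := P.1.part_mem.mpr (Finset.mem_univ a0)
      rwa [P.2.2] at h
    rw [Finpartition.extend_parts, avoid_parts_erase P.1 hb, Finset.insert_erase hb]
  right_inv P := by
    apply Subtype.ext
    apply Finpartition.ext
    have hbmem : b ∈ (Finpartition.extend P.1
        (by simpa [Finset.bot_eq_empty, ← Finset.nonempty_iff_ne_empty] using ⟨a0, hab⟩)
        Finset.sdiff_disjoint
        (by rw [Finset.sup_eq_union, Finset.sdiff_union_of_subset (Finset.subset_univ b)])).parts := by
      rw [Finpartition.extend_parts]; exact Finset.mem_insert_self b _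
    rw [avoid_parts_erase _ hbmem, Finpartition.extend_parts]
    rw [Finset.erase_insert]
    intro hbP
    have hle := P.1.le hbP
    have := hle hab
    rw [Finset.mem_sdiff] at this
    exact this.2 hab


lemma card_pred_eq_sum (m : ℕ) (a0 : γ) :
    Nat.card {P : Finpartition (Finset.univ : Finset γ) // ∀ c ∈ P.parts, #c ≤ m}
      = ∑ b ∈ (Finset.univ : Finset (Finset γ)).filter (fun b => a0 ∈ b ∧ #b ≤ m),
          restrictedBell (Fintype.card γ - #b) m := by
  classical
  have maps : ∀ P : {P : Finpartition (Finset.univ : Finset γ) // ∀ c ∈ P.parts, #c ≤ m},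
      P ∈ (Finset.univ : Finset _) →
        P.1.part a0 ∈ (Finset.univ : Finset (Finset γ)).filter (fun b => a0 ∈ b ∧ #b ≤ m) := by
    intro P _
    simp only [Finset.mem_filter, Finset.mem_univ, true_and]
    exact ⟨P.1.mem_part (Finset.mem_univ a0), P.2 _ (P.1.part_mem.mpr (Finset.mem_univ a0))⟩
  rw [Nat.card_eq_fintype_card, Fintype.card, Finset.card_eq_sum_card_fiberwise maps]
  refine Finset.sum_congr rfl ?_
  intro b hb
  simp only [Finset.mem_filter, Finset.mem_univ, true_and] at hb
  obtain ⟨hab, hbm⟩ := hb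
  have h1 : (Finset.univ.filter fun P : {P : Finpartition (Finset.univ : Finset γ) //
        ∀ c ∈ P.parts, #c ≤ m} => P.1.part a0 = b).card
      = Nat.card {P : {P : Finpartition (Finset.univ : Finset γ) //
          ∀ c ∈ P.parts, #c ≤ m} // P.1.part a0 = b} := by
    rw [Nat.card_eq_fintype_card, Fintype.card_subtype]
  rw [h1, Nat.card_congr ((Equiv.subtypeSubtypeEquivSubtypeInter _ _).trans
      (fiberEquiv a0 b hab m hbm)), card_parts_eq_restrictedBell]
  congr 1
  rw [Finset.card_sdiff_of_subset (Finset.subset_univ b), Finset.card_univ]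

lemma sum_blocks (m n : ℕ) :
    ∑ b ∈ (Finset.univ : Finset (Finset (Fin (n+1)))).filter
        (fun b => Fin.last n ∈ b ∧ #b ≤ m),
      restrictedBell (Fintype.card (Fin (n+1)) - #b) m
    = ∑ j ∈ Finset.range (n+1), (if j < m then n.choose j else 0) * restrictedBell (n - j) m := by
  classical
  have maps : ∀ b ∈ (Finset.univ : Finset (Finset (Fin (n+1)))).filter
      (fun b => Fin.last n ∈ b ∧ #b ≤ m), #b - 1 ∈ Finset.range (n+1) := by
    intro b hb
    simp only [Finset.mem_filter, Finset.mem_univ, true_and] at hb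
    have h1 : #b ≤ n + 1 := by
      have := Finset.card_le_univ b
      simpa using this
    simp only [Finset.mem_range]
    omega
  rw [← Finset.sum_fiberwise_of_maps_to maps]
  refine Finset.sum_congr rfl ?_
  intro j hj
  rw [Finset.mem_range] at hj
  by_cases hjm : j < m
  · have hset : ((Finset.univ : Finset (Finset (Fin (n+1)))).filter
        (fun b => Fin.last n ∈ b ∧ #b ≤ m)).filter (fun b => #b - 1 = j)
        = (Finset.univ : Finset (Finset (Fin (n+1)))).filter
            (fun b => Fin.last n ∈ b ∧ #b = j + 1) := by
      ext b
      simp only [Finset.mem_filter, Finset.mem_univ, true_and]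
      constructor
      · rintro ⟨⟨h1, h2⟩, h3⟩
        have : 1 ≤ #b := Finset.card_pos.mpr ⟨_, h1⟩
        exact ⟨h1, by omega⟩
      · rintro ⟨h1, h2⟩
        exact ⟨⟨h1, by omega⟩, by omega⟩
    rw [hset]
    have hcarderase : #((Finset.univ : Finset (Fin (n+1))).erase (Fin.last n)) = n := by
      rw [Finset.card_erase_of_mem (Finset.mem_univ _), Finset.card_univ, Fintype.card_fin]
      omega
    have hcard : #((Finset.univ : Finset (Finset (Fin (n+1)))).filter
        (fun b => Fin.last n ∈ b ∧ #b = j + 1)) = n.choose j := by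
      have hbij : #((Finset.univ : Finset (Finset (Fin (n+1)))).filter
          (fun b => Fin.last n ∈ b ∧ #b = j + 1))
          = #(Finset.powersetCard j ((Finset.univ : Finset (Fin (n+1))).erase (Fin.last n))) := by
        refine Finset.card_bij' (fun b _ => b.erase (Fin.last n))
          (fun t _ => insert (Fin.last n) t) ?_ ?_ ?_ ?_
        case _ =>
          intro b hb
          simp only [Finset.mem_filter, Finset.mem_univ, true_and] at hb
          rw [Finset.mem_powersetCard]
          exact ⟨Finset.erase_subset_erase _ (Finset.subset_univ b),
            by rw [Finset.card_erase_of_mem hb.1, hb.2]; omega⟩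
        case _ =>
          intro t ht
          rw [Finset.mem_powersetCard] at ht
          have hlast : Fin.last n ∉ t := by
            intro h
            have := ht.1 h
            simp at this
          simp only [Finset.mem_filter, Finset.mem_univ, true_and]
          exact ⟨Finset.mem_insert_self _ _, by rw [Finset.card_insert_of_notMem hlast, ht.2]⟩
        case _ =>
          intro b hb
          simp only [Finset.mem_filter, Finset.mem_univ, true_and] at hb
          exact Finset.insert_erase hb.1
        case _ =>
          intro t ht
          rw [Finset.mem_powersetCard] at ht
          have hlast : Fin.last n ∉ t := by
            intro h
            have := ht.1 h
            simp at this
          exact Finset.erase_insert hlast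
      rw [hbij, Finset.card_powersetCard, hcarderase]
    have hconst : ∀ b ∈ (Finset.univ : Finset (Finset (Fin (n+1)))).filter
        (fun b => Fin.last n ∈ b ∧ #b = j + 1),
        restrictedBell (Fintype.card (Fin (n+1)) - #b) m = restrictedBell (n - j) m := by
      intro b hb
      simp only [Finset.mem_filter, Finset.mem_univ, true_and] at hb
      rw [hb.2, Fintype.card_fin]
      congr 1
      omega
    rw [Finset.sum_congr rfl hconst, Finset.sum_const, hcard, smul_eq_mul, if_pos hjm]
  · have hempty : ((Finset.univ : Finset (Finset (Fin (n+1)))).filter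
        (fun b => Fin.last n ∈ b ∧ #b ≤ m)).filter (fun b => #b - 1 = j) = ∅ := by
      rw [Finset.filter_eq_empty_iff]
      intro b hb
      simp only [Finset.mem_filter, Finset.mem_univ, true_and] at hb
      have : 1 ≤ #b := Finset.card_pos.mpr ⟨_, hb.1⟩
      omega
    rw [hempty, Finset.sum_empty, if_neg hjm, zero_mul]

theorem rb_succ (m n : ℕ) :
    restrictedBell (n+1) m
      = ∑ j ∈ Finset.range (n+1),
          (if j < m then n.choose j else 0) * restrictedBell (n - j) m := by
  have h := card_pred_eq_sum (γ := Fin (n+1)) m (Fin.last n)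
  rw [show restrictedBell (n+1) m = Nat.card {P : Finpartition (Finset.univ : Finset (Fin (n+1))) //
      ∀ c ∈ P.parts, #c ≤ m} from rfl, h, sum_blocks m n]

theorem rb_zero (m : ℕ) : restrictedBell 0 m = 1 := by
  classical
  rw [restrictedBell, Nat.card_eq_one_iff_unique]
  constructor
  · constructor
    intro P Q
    apply Subtype.ext
    apply Finpartition.ext
    have hP : (P.1).parts = ∅ := by
      rw [Finpartition.parts_eq_empty_iff]
      simp
    have hQ : (Q.1).parts = ∅ := by
      rw [Finpartition.parts_eq_empty_iff]
      simp
    rw [hP, hQ]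
  · refine ⟨⊥, ?_⟩
    intro c hc
    rw [Finpartition.mem_bot_iff] at hc
    obtain ⟨a, ha, rfl⟩ := hc
    exact absurd ha (by simp)

theorem rb_pos (m n : ℕ) (hm : 1 ≤ m) : 0 < restrictedBell n m := by
  have : Nonempty {P : Finpartition (Finset.univ : Finset (Fin n)) //
      ∀ b ∈ P.parts, b.card ≤ m} := by
    refine ⟨⊥, ?_⟩
    intro c hc
    rw [Finpartition.mem_bot_iff] at hc
    obtain ⟨a, ha, rfl⟩ := hc
    simpa using hm
  exact Nat.card_pos

end RBAux

namespace RBAnalytic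

open Finset

variable (m : ℕ)

/-- `C m i = B_{i,≤m}/i!` for `i ≥ 0`, and `0` for `i < 0`. -/
noncomputable def C (i : ℤ) : ℚ :=
  if 0 ≤ i then (restrictedBell i.toNat m : ℚ) / (i.toNat.factorial : ℚ) else 0

/-- `U m j = 1/j!` for `0 ≤ j < m`, and `0` otherwise. -/
noncomputable def U (j : ℤ) : ℚ :=
  if 0 ≤ j ∧ j < (m : ℤ) then ((j.toNat.factorial : ℚ))⁻¹ else 0

/-- summation window -/
noncomputable def K : Finset ℤ := Finset.Icc (-2) (m + 2)

noncomputable def d (i : ℤ) : ℚ := ∑ j ∈ K m, U m j * C m (i - j)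

lemma C_nonneg (i : ℤ) : 0 ≤ C m i := by
  unfold C
  split
  · positivity
  · exact le_rfl

lemma C_of_neg {i : ℤ} (hi : i < 0) : C m i = 0 := by
  unfold C
  rw [if_neg (by omega)]

lemma C_coe (k : ℕ) : C m (k : ℤ) = (restrictedBell k m : ℚ) / (k.factorial : ℚ) := by
  unfold C
  rw [if_pos (by positivity), Int.toNat_natCast]

lemma C_pos (hm : 1 ≤ m) {i : ℤ} (hi : 0 ≤ i) : 0 < C m i := by
  unfold C
  rw [if_pos hi]
  have h1 := RBAux.rb_pos m i.toNat hm
  positivity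

lemma C_zero : C m 0 = 1 := by
  have := C_coe m 0
  simpa [RBAux.rb_zero] using this

lemma U_nonneg (j : ℤ) : 0 ≤ U m j := by
  unfold U
  split
  · positivity
  · exact le_rfl

lemma U_supp {j : ℤ} (h : U m j ≠ 0) : 0 ≤ j ∧ j < (m : ℤ) := by
  by_contra hc
  exact h (by unfold U; rw [if_neg hc])

lemma U_zero (hm : 1 ≤ m) : U m 0 = 1 := by
  unfold U
  rw [if_pos ⟨le_refl 0, by exact_mod_cast hm⟩]
  simp

lemma U_neg_one : U m (-1) = 0 := by
  unfold U
  rw [if_neg (by omega)]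

/-- two-window comparison: sums agree over any two windows containing the support -/
lemma sum_window {γ : Type*} [DecidableEq γ] (g : γ → ℚ) (S T : Finset γ)
    (h : ∀ x, g x ≠ 0 → x ∈ S ∧ x ∈ T) : ∑ x ∈ S, g x = ∑ x ∈ T, g x := by
  rw [← Finset.sum_subset (Finset.inter_subset_left (s₁ := S) (s₂ := T))
      (fun x hxS hxST => by
        by_contra hne
        exact hxST (Finset.mem_inter.mpr ⟨hxS, (h x hne).2⟩)),
    ← Finset.sum_subset (Finset.inter_subset_right (s₁ := S) (s₂ := T))
      (fun x hxT hxST => by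
        by_contra hne
        exact hxST (Finset.mem_inter.mpr ⟨(h x hne).1, hxT⟩))]

lemma sum_int_range (N : ℕ) (g : ℤ → ℚ) :
    ∑ j ∈ Finset.Icc (0:ℤ) (N:ℤ), g j = ∑ j ∈ Finset.range (N+1), g (j : ℤ) := by
  refine Finset.sum_nbij' (fun j => j.toNat) (fun j => (j : ℤ)) ?_ ?_ ?_ ?_ ?_
  · intro a ha
    rw [Finset.mem_Icc] at ha
    rw [Finset.mem_range]
    omega
  · intro a ha
    rw [Finset.mem_range] at ha
    rw [Finset.mem_Icc]
    omega
  · intro a ha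
    rw [Finset.mem_Icc] at ha
    omega
  · intro a ha
    simp
  · intro a ha
    rw [Finset.mem_Icc] at ha
    rw [Int.toNat_of_nonneg ha.1]

lemma d_eq (hm : 1 ≤ m) (i : ℕ) : d m (i : ℤ) = ((i : ℚ) + 1) * C m ((i : ℤ) + 1) := by
  have h1 : d m (i : ℤ) = ∑ j ∈ Finset.Icc (0:ℤ) (i:ℤ), U m j * C m ((i:ℤ) - j) := by
    apply sum_window
    intro j hj
    have h2 : U m j ≠ 0 := by
      intro h; rw [h, zero_mul] at hj; exact hj rfl
    have h3 : C m ((i:ℤ) - j) ≠ 0 := by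
      intro h; rw [h, mul_zero] at hj; exact hj rfl
    obtain ⟨hj0, hjm⟩ := U_supp m h2
    have h4 : 0 ≤ (i:ℤ) - j := by
      by_contra hc
      exact h3 (C_of_neg m (by omega))
    constructor
    · rw [K, Finset.mem_Icc]; omega
    · rw [Finset.mem_Icc]; omega
  rw [h1, sum_int_range]
  have h5 : ∀ j ∈ Finset.range (i+1),
      U m (j : ℤ) * C m ((i:ℤ) - (j:ℤ))
        = ((if j < m then (i.choose j : ℚ) else 0) * (restrictedBell (i - j) m : ℚ))
            / (i.factorial : ℚ) := by
    intro j hj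
    rw [Finset.mem_range] at hj
    have hji : j ≤ i := by omega
    have hcast : (i:ℤ) - (j:ℤ) = ((i - j : ℕ) : ℤ) := by
      omega
    rw [hcast, C_coe]
    unfold U
    by_cases hjm : j < m
    · rw [if_pos (by constructor <;> omega), if_pos hjm, Int.toNat_natCast]
      have hfact : (i.factorial : ℚ) = (i.choose j : ℚ) * (j.factorial : ℚ) * ((i-j).factorial : ℚ) := by
        exact_mod_cast congrArg (Nat.cast (R := ℚ))
          (Nat.choose_mul_factorial_mul_factorial hji).symm
      have hj0 : (j.factorial : ℚ) ≠ 0 := by positivity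
      have hij0 : ((i-j).factorial : ℚ) ≠ 0 := by positivity
      have hi0 : (i.factorial : ℚ) ≠ 0 := by positivity
      field_simp
      rw [hfact]
      ring
    · rw [if_neg (by intro hc; exact hjm (by exact_mod_cast hc.2)), if_neg hjm]
      simp
  rw [Finset.sum_congr rfl h5, ← Finset.sum_div]
  have h6 : ∑ j ∈ Finset.range (i+1), (if j < m then (i.choose j : ℚ) else 0)
      * (restrictedBell (i - j) m : ℚ) = ((restrictedBell (i+1) m : ℚ)) := by
    rw [RBAux.rb_succ m i, Nat.cast_sum]
    apply Finset.sum_congr rfl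
    intro j hj
    rw [Nat.cast_mul]
    congr 1
    split <;> simp
  rw [h6]
  have h7 : ((i:ℤ) + 1) = ((i+1 : ℕ) : ℤ) := by push_cast; ring
  rw [h7, C_coe]
  have h8 : ((i+1).factorial : ℚ) = ((i:ℚ)+1) * (i.factorial : ℚ) := by
    rw [Nat.factorial_succ]; push_cast; ring
  rw [h8]
  have hi0 : (i.factorial : ℚ) ≠ 0 := by positivity
  have hi1 : ((i:ℚ)+1) ≠ 0 := by positivity
  field_simp


lemma rb_one : restrictedBell 1 m = restrictedBell 0 m * (if 0 < m then 1 else 0) := by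
  have h := RBAux.rb_succ m 0
  simp at h
  rw [h]
  split <;> simp [RBAux.rb_zero]

lemma C_one (hm : 1 ≤ m) : C m 1 = 1 := by
  have h1 : restrictedBell 1 m = 1 := by
    rw [rb_one m, RBAux.rb_zero, if_pos (by omega : 0 < m)]
  have := C_coe m 1
  rw [show ((1:ℕ):ℤ) = 1 from rfl] at this
  rw [this, h1]
  simp

lemma C_two_le_one (hm : 1 ≤ m) : C m 2 ≤ 1 := by
  have h2 : restrictedBell 2 m ≤ 2 := by
    have h := RBAux.rb_succ m 1
    rw [Finset.sum_range_succ, Finset.sum_range_succ, Finset.sum_range_zero] at h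
    have h1 : restrictedBell 1 m = 1 := by
      rw [rb_one m, RBAux.rb_zero, if_pos (by omega : 0 < m)]
    rw [h]
    simp only [zero_add]
    rw [RBAux.rb_zero, h1]
    split <;> split <;> simp [Nat.choose]
  have := C_coe m 2
  rw [show ((2:ℕ):ℤ) = 2 from rfl] at this
  rw [this]
  rw [div_le_one (by positivity)]
  have : (Nat.factorial 2 : ℚ) = 2 := by norm_num [Nat.factorial]
  rw [this]
  exact_mod_cast h2

lemma U_tp (a b : ℤ) (hab : a ≤ b) : U m (a-1) * U m (b+1) ≤ U m a * U m b := by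
  rcases eq_or_ne (U m (a-1)) 0 with h | h
  · rw [h, zero_mul]
    exact mul_nonneg (U_nonneg m a) (U_nonneg m b)
  rcases eq_or_ne (U m (b+1)) 0 with h' | h'
  · rw [h', mul_zero]
    exact mul_nonneg (U_nonneg m a) (U_nonneg m b)
  obtain ⟨ha1, ha2⟩ := U_supp m h
  obtain ⟨hb1, hb2⟩ := U_supp m h'
  have hva : U m a = ((a.toNat.factorial : ℚ))⁻¹ := by
    rw [U, if_pos ⟨by omega, by omega⟩]
  have hvb : U m b = ((b.toNat.factorial : ℚ))⁻¹ := by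
    rw [U, if_pos ⟨by omega, by omega⟩]
  have hva' : U m (a-1) = (((a-1).toNat.factorial : ℚ))⁻¹ := by
    rw [U, if_pos ⟨by omega, by omega⟩]
  have hvb' : U m (b+1) = (((b+1).toNat.factorial : ℚ))⁻¹ := by
    rw [U, if_pos ⟨by omega, by omega⟩]
  rw [hva, hvb, hva', hvb', ← mul_inv, ← mul_inv]
  have hp : a.toNat = (a-1).toNat + 1 := by omega
  have hq : (b+1).toNat = b.toNat + 1 := by omega
  apply inv_anti₀
  · positivity
  · have hnat : a.toNat.factorial * b.toNat.factorial
        ≤ (a-1).toNat.factorial * (b+1).toNat.factorial := by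
      rw [hp, hq, Nat.factorial_succ, Nat.factorial_succ]
      have hle : (a-1).toNat + 1 ≤ b.toNat + 1 := by omega
      calc ((a-1).toNat + 1) * (a-1).toNat.factorial * b.toNat.factorial
          ≤ (b.toNat + 1) * (a-1).toNat.factorial * b.toNat.factorial := by
            apply Nat.mul_le_mul_right
            exact Nat.mul_le_mul_right _ hle
        _ = (a-1).toNat.factorial * ((b.toNat + 1) * b.toNat.factorial) := by ring
    exact_mod_cast hnat

lemma U_mem_K {j : ℤ} (h : U m j ≠ 0) : j ∈ K m := by
  obtain ⟨h1, h2⟩ := U_supp m h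
  rw [K, Finset.mem_Icc]
  omega

/-- shift the summation index by `c` -/
lemma sum_shift (a b c : ℤ) (g : ℤ → ℚ) :
    ∑ j ∈ Finset.Icc a b, g j = ∑ j ∈ Finset.Icc (a + c) (b + c), g (j - c) := by
  rw [← Finset.map_add_right_Icc a b c, Finset.sum_map]
  apply Finset.sum_congr rfl
  intro x _
  simp [addRightEmbedding]

lemma d_shift_left (n : ℤ) :
    d m (n - 2) = ∑ j ∈ K m, U m (j - 1) * C m (n - 1 - j) := by
  rw [d, K, sum_shift (-2) (m+2) 1 (fun j => U m j * C m (n - 2 - j))]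
  have h1 : ∑ j ∈ Finset.Icc (-2 + 1 : ℤ) (m + 2 + 1), U m (j - 1) * C m (n - 2 - (j - 1))
      = ∑ j ∈ Finset.Icc (-2 : ℤ) (m + 2), U m (j - 1) * C m (n - 2 - (j - 1)) := by
    apply sum_window
    intro j hj
    have h2 : U m (j - 1) ≠ 0 := fun h => hj (by rw [h, zero_mul])
    obtain ⟨h3, h4⟩ := U_supp m h2
    constructor <;> (rw [Finset.mem_Icc]; omega)
  rw [h1]
  apply Finset.sum_congr rfl
  intro j _
  congr 2
  ring

lemma d_shift_right (n : ℤ) :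
    d m n = ∑ j ∈ K m, U m (j + 1) * C m (n - 1 - j) := by
  rw [d, K, sum_shift (-2) (m+2) (-1) (fun j => U m j * C m (n - j))]
  have h1 : ∑ j ∈ Finset.Icc (-2 + -1 : ℤ) (m + 2 + -1), U m (j - -1) * C m (n - (j - -1))
      = ∑ j ∈ Finset.Icc (-2 : ℤ) (m + 2), U m (j - -1) * C m (n - (j - -1)) := by
    apply sum_window
    intro j hj
    have h2 : U m (j - -1) ≠ 0 := fun h => hj (by rw [h, zero_mul])
    obtain ⟨h3, h4⟩ := U_supp m h2
    constructor <;> (rw [Finset.mem_Icc]; omega)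
  rw [h1]
  apply Finset.sum_congr rfl
  intro j _
  have : j - -1 = j + 1 := by ring
  rw [this]
  congr 2
  ring

/-- The summand of the Cauchy–Binet expansion. -/
noncomputable def F (n : ℤ) (p : ℤ × ℤ) : ℚ :=
  (U m p.1 * U m p.2 - U m (p.1 - 1) * U m (p.2 + 1)) * (C m (n - 1 - p.1) * C m (n - 1 - p.2))

lemma F_supp {n : ℤ} {p : ℤ × ℤ} (h : F m n p ≠ 0) :
    (0 ≤ p.1 ∧ p.1 ≤ (m : ℤ)) ∧ (-1 ≤ p.2 ∧ p.2 ≤ (m : ℤ) - 1) := by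
  rw [F] at h
  have h1 : U m p.1 * U m p.2 ≠ 0 ∨ U m (p.1 - 1) * U m (p.2 + 1) ≠ 0 := by
    by_contra hc
    push_neg at hc
    rw [hc.1, hc.2, sub_self, zero_mul] at h
    exact h rfl
  rcases h1 with h1 | h1
  · have ha : U m p.1 ≠ 0 := fun hh => h1 (by rw [hh, zero_mul])
    have hb : U m p.2 ≠ 0 := fun hh => h1 (by rw [hh, mul_zero])
    obtain ⟨_, _⟩ := U_supp m ha
    obtain ⟨_, _⟩ := U_supp m hb
    omega
  · have ha : U m (p.1 - 1) ≠ 0 := fun hh => h1 (by rw [hh, zero_mul])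
    have hb : U m (p.2 + 1) ≠ 0 := fun hh => h1 (by rw [hh, mul_zero])
    obtain ⟨_, _⟩ := U_supp m ha
    obtain ⟨_, _⟩ := U_supp m hb
    omega

/-- expansion of the 2×2 Toeplitz minor as a double sum -/
lemma minor_expand (n : ℤ) :
    d m (n-1) ^ 2 - d m (n-2) * d m n = ∑ p ∈ (K m) ×ˢ (K m), F m n p := by
  have e1 : d m (n-1) ^ 2 = ∑ j ∈ K m, ∑ k ∈ K m,
      (U m j * C m (n - 1 - j)) * (U m k * C m (n - 1 - k)) := by
    rw [sq, d, Finset.sum_mul_sum]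
  have e2 : d m (n-2) * d m n = ∑ j ∈ K m, ∑ k ∈ K m,
      (U m (j - 1) * C m (n - 1 - j)) * (U m (k + 1) * C m (n - 1 - k)) := by
    rw [d_shift_left, d_shift_right, Finset.sum_mul_sum]
  rw [e1, e2, ← Finset.sum_sub_distrib]
  rw [Finset.sum_product]
  apply Finset.sum_congr rfl
  intro j _
  rw [← Finset.sum_sub_distrib]
  apply Finset.sum_congr rfl
  intro k _
  rw [F]
  ring

noncomputable def Wn : Finset (ℤ × ℤ) := (Finset.Icc (-1 : ℤ) (m+1)) ×ˢ (Finset.Icc (-2 : ℤ) m)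

lemma sum_F_Wn (n : ℤ) : ∑ p ∈ (K m) ×ˢ (K m), F m n p = ∑ p ∈ Wn m, F m n p := by
  apply sum_window
  intro p hp
  obtain ⟨⟨h1, h2⟩, h3, h4⟩ := F_supp m hp
  constructor
  · rw [Finset.mem_product, K, Finset.mem_Icc, Finset.mem_Icc]
    omega
  · rw [Wn, Finset.mem_product, Finset.mem_Icc, Finset.mem_Icc]
    omega

/-- the involution -/
def sig (p : ℤ × ℤ) : ℤ × ℤ := (p.2 + 1, p.1 - 1)

lemma key_ineq (hm : 1 ≤ m) (n : ℤ)
    (hCg : ∀ a b : ℤ, a ≤ b → b + 1 ≤ n → C m (a-1) * C m (b+1) ≤ C m a * C m b) :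
    C m (n-1) * d m (n-1) - C m n * d m (n-2) ≤ d m (n-1)^2 - d m (n-2) * d m n := by
  rw [minor_expand, sum_F_Wn]
  -- split the window into three regions
  rw [← Finset.sum_filter_add_sum_filter_not (Wn m) (fun p => p.1 ≤ p.2)]
  rw [← Finset.sum_filter_add_sum_filter_not ((Wn m).filter (fun p => ¬ p.1 ≤ p.2))
      (fun p => p.1 = p.2 + 1)]
  have hzero : ∑ p ∈ (((Wn m).filter (fun p => ¬ p.1 ≤ p.2)).filter
      (fun p => p.1 = p.2 + 1)), F m n p = 0 := by
    apply Finset.sum_eq_zero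
    intro p hp
    simp only [Finset.mem_filter] at hp
    rw [F, hp.2]
    have : p.2 + 1 - 1 = p.2 := by ring
    rw [this]
    ring
  rw [hzero, zero_add]
  -- identify the third region
  have hS3 : ((Wn m).filter (fun p => ¬ p.1 ≤ p.2)).filter (fun p => ¬ p.1 = p.2 + 1)
      = (Wn m).filter (fun p => p.2 + 2 ≤ p.1) := by
    rw [Finset.filter_filter]
    apply Finset.filter_congr
    intro p _
    constructor
    · rintro ⟨h1, h2⟩; omega
    · intro h; constructor <;> omega
  rw [hS3]
  -- reflect the third region onto the first
  have hrefl : ∑ p ∈ (Wn m).filter (fun p => p.2 + 2 ≤ p.1), F m n p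
      = ∑ p ∈ (Wn m).filter (fun p => p.1 ≤ p.2), F m n (sig p) := by
    refine Finset.sum_nbij' sig sig ?_ ?_ ?_ ?_ ?_
    · intro p hp
      simp only [Finset.mem_filter, Wn, Finset.mem_product, Finset.mem_Icc, sig] at hp ⊢
      omega
    · intro p hp
      simp only [Finset.mem_filter, Wn, Finset.mem_product, Finset.mem_Icc, sig] at hp ⊢
      omega
    · intro p _
      simp [sig, Prod.ext_iff]
    · intro p _
      simp [sig, Prod.ext_iff]
    · intro p _
      have hss : sig (sig p) = p := by simp [sig, Prod.ext_iff]
      rw [hss]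
  rw [hrefl, ← Finset.sum_add_distrib]
  -- now bound from below by the p.1 = 0 row
  have hG : ∀ p : ℤ × ℤ, F m n p + F m n (sig p)
      = (U m p.1 * U m p.2 - U m (p.1 - 1) * U m (p.2 + 1))
          * (C m (n - 1 - p.1) * C m (n - 1 - p.2) - C m (n - 2 - p.2) * C m (n - p.1)) := by
    intro p
    rw [F, F, sig]
    have e1 : (p.2 + 1 : ℤ) - 1 = p.2 := by ring
    have e2 : (p.1 - 1 : ℤ) + 1 = p.1 := by ring
    have e3 : n - 1 - (p.2 + 1) = n - 2 - p.2 := by ring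
    have e4 : n - 1 - (p.1 - 1) = n - p.1 := by ring
    simp only [e1, e2, e3, e4]
    ring
  have hlow : ∑ p ∈ ((Wn m).filter (fun p => p.1 ≤ p.2)).filter (fun p => p.1 = 0),
        (F m n p + F m n (sig p))
      ≤ ∑ p ∈ (Wn m).filter (fun p => p.1 ≤ p.2), (F m n p + F m n (sig p)) := by
    apply Finset.sum_le_sum_of_subset_of_nonneg (Finset.filter_subset _ _)
    intro p hp hp0
    have hpmem := hp
    simp only [Finset.mem_filter, Wn, Finset.mem_product, Finset.mem_Icc] at hp
    obtain ⟨⟨⟨hj1, hj2⟩, hk1, hk2⟩, hjk⟩ := hp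
    rw [hG]
    have hp1 : p.1 ≠ 0 := by
      intro hc
      exact hp0 (Finset.mem_filter.mpr ⟨hpmem, hc⟩)
    rcases (by omega : p.1 = -1 ∨ 1 ≤ p.1) with h | h
    · have hu1 : U m p.1 = 0 := by rw [h]; exact U_neg_one m
      have hu2 : U m (p.1 - 1) = 0 := by
        by_contra hc
        obtain ⟨h1, _⟩ := U_supp m hc
        omega
      rw [hu1, hu2, zero_mul, zero_mul, sub_self, zero_mul]
    · apply mul_nonneg
      · rw [sub_nonneg]
        exact U_tp m p.1 p.2 hjk
      · rw [sub_nonneg]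
        have := hCg (n - 1 - p.2) (n - 1 - p.1) (by omega) (by omega)
        have e5 : n - 1 - p.2 - 1 = n - 2 - p.2 := by ring
        have e6 : n - 1 - p.1 + 1 = n - p.1 := by ring
        rw [e5, e6] at this
        calc C m (n - 2 - p.2) * C m (n - p.1)
            ≤ C m (n - 1 - p.2) * C m (n - 1 - p.1) := this
          _ = C m (n - 1 - p.1) * C m (n - 1 - p.2) := by ring
  refine le_trans (le_of_eq ?_) hlow
  -- compute the p.1 = 0 row
  have hrow : ∑ p ∈ ((Wn m).filter (fun p => p.1 ≤ p.2)).filter (fun p => p.1 = 0),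
      (F m n p + F m n (sig p))
      = ∑ k ∈ Finset.Icc (0:ℤ) m,
          U m k * (C m (n-1) * C m (n-1-k) - C m (n-2-k) * C m n) := by
    refine Finset.sum_nbij' (fun p => p.2) (fun k => ((0:ℤ), k)) ?_ ?_ ?_ ?_ ?_
    · intro p hp
      simp only [Finset.mem_filter, Wn, Finset.mem_product, Finset.mem_Icc] at hp ⊢
      omega
    · intro k hk
      simp only [Finset.mem_Icc] at hk
      refine Finset.mem_filter.mpr ⟨Finset.mem_filter.mpr ⟨?_, ?_⟩, rfl⟩
      · rw [Wn, Finset.mem_product, Finset.mem_Icc, Finset.mem_Icc]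
        show ((-1:ℤ) ≤ 0 ∧ (0:ℤ) ≤ m + 1) ∧ (-2:ℤ) ≤ k ∧ k ≤ m
        omega
      · show (0:ℤ) ≤ k
        omega
    · intro p hp
      simp only [Finset.mem_filter] at hp
      exact Prod.ext (by simp [hp.2]) (by simp)
    · intro k _
      simp
    · intro p hp
      simp only [Finset.mem_filter, Wn, Finset.mem_product, Finset.mem_Icc] at hp
      rw [hG]
      rw [hp.2, U_zero m hm]
      have : (0:ℤ) - 1 = -1 := by ring
      rw [this, U_neg_one m]
      have e7 : n - 1 - (0:ℤ) = n - 1 := by ring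
      have e8 : n - (0:ℤ) = n := by ring
      rw [e7, e8]
      ring
  rw [hrow]
  -- evaluate the row sum
  have hsplit : ∑ k ∈ Finset.Icc (0:ℤ) m,
      U m k * (C m (n-1) * C m (n-1-k) - C m (n-2-k) * C m n)
      = C m (n-1) * (∑ k ∈ Finset.Icc (0:ℤ) m, U m k * C m (n-1-k))
        - C m n * (∑ k ∈ Finset.Icc (0:ℤ) m, U m k * C m (n-2-k)) := by
    rw [Finset.mul_sum, Finset.mul_sum, ← Finset.sum_sub_distrib]
    apply Finset.sum_congr rfl
    intro k _
    ring
  rw [hsplit]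
  have hw1 : ∑ k ∈ Finset.Icc (0:ℤ) m, U m k * C m (n-1-k) = d m (n-1) := by
    rw [d]
    apply sum_window
    intro k hk
    have h2 : U m k ≠ 0 := fun h => hk (by rw [h, zero_mul])
    obtain ⟨h3, h4⟩ := U_supp m h2
    rw [K]
    constructor <;> (rw [Finset.mem_Icc]; omega)
  have hw2 : ∑ k ∈ Finset.Icc (0:ℤ) m, U m k * C m (n-2-k) = d m (n-2) := by
    rw [d]
    apply sum_window
    intro k hk
    have h2 : U m k ≠ 0 := fun h => hk (by rw [h, zero_mul])
    obtain ⟨h3, h4⟩ := U_supp m h2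
    rw [K]
    constructor <;> (rw [Finset.mem_Icc]; omega)
  rw [hw1, hw2]



lemma glc (hm : 1 ≤ m) (N : ℤ)
    (hQ : ∀ i : ℤ, 0 ≤ i → i + 2 ≤ N + 1 → C m i * C m (i+2) ≤ C m (i+1)^2) :
    ∀ a b : ℤ, a ≤ b → b + 1 ≤ N + 1 → C m (a-1) * C m (b+1) ≤ C m a * C m b := by
  intro a b hab hbN
  rcases le_or_gt a 0 with ha | ha
  · rw [C_of_neg m (by omega : a - 1 < 0), zero_mul]
    exact mul_nonneg (C_nonneg m a) (C_nonneg m b)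
  · have base : a + 1 ≤ N + 1 → C m (a-1) * C m (a+1) ≤ C m a * C m a := by
      intro _
      have h := hQ (a-1) (by omega) (by omega)
      have e1 : a - 1 + 2 = a + 1 := by ring
      have e2 : a - 1 + 1 = a := by ring
      rw [e1, e2, sq] at h
      exact h
    have step : ∀ b : ℤ, a ≤ b →
        ((b + 1 ≤ N + 1 → C m (a-1) * C m (b+1) ≤ C m a * C m b)) →
        ((b + 1) + 1 ≤ N + 1 → C m (a-1) * C m ((b+1)+1) ≤ C m a * C m (b+1)) := by
      intro b hb IH hb2
      have hQb := hQ b (by omega) (by omega)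
      have hIH := IH (by omega)
      have hCb := C_pos m hm (by omega : (0:ℤ) ≤ b)
      have e3 : b + 1 + 1 = b + 2 := by ring
      rw [e3]
      have h1 : C m (a-1) * (C m b * C m (b+2)) ≤ C m (a-1) * C m (b+1)^2 :=
        mul_le_mul_of_nonneg_left hQb (C_nonneg m (a-1))
      have h2 : (C m (a-1) * C m (b+1)) * C m (b+1) ≤ (C m a * C m b) * C m (b+1) :=
        mul_le_mul_of_nonneg_right hIH (C_nonneg m (b+1))
      have h3 : (C m (a-1) * C m (b+2)) * C m b ≤ (C m a * C m (b+1)) * C m b := by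
        nlinarith [h1, h2]
      exact le_of_mul_le_mul_right h3 hCb
    exact Int.le_induction base step b hab hbN

lemma cdec (hm : 1 ≤ m) (N : ℤ)
    (hQ : ∀ i : ℤ, 0 ≤ i → i + 2 ≤ N + 1 → C m i * C m (i+2) ≤ C m (i+1)^2) :
    ∀ b : ℤ, 0 ≤ b → b + 1 ≤ N + 1 → C m (b+1) ≤ C m b := by
  intro b hb hbN
  rcases eq_or_lt_of_le hb with h0 | h0
  · rw [← h0]
    have e : (0:ℤ) + 1 = 1 := by ring
    rw [e, C_zero, C_one m hm]
  · have h := glc m hm N hQ 1 b (by omega) hbN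
    rw [show (1:ℤ) - 1 = 0 from rfl, C_zero, C_one m hm, one_mul, one_mul] at h
    exact h

lemma main (hm : 1 ≤ m) : ∀ N : ℕ, C m (N:ℤ) * C m ((N:ℤ)+2) ≤ C m ((N:ℤ)+1)^2 := by
  intro N
  induction N using Nat.strong_induction_on with
  | _ N IH =>
    have hQ : ∀ i : ℤ, 0 ≤ i → i + 2 ≤ (N:ℤ) + 1 → C m i * C m (i+2) ≤ C m (i+1)^2 := by
      intro i hi0 hiN
      have hi : (i.toNat : ℤ) = i := Int.toNat_of_nonneg hi0
      have := IH i.toNat (by omega)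
      rwa [hi] at this
    rcases Nat.eq_zero_or_pos N with h0 | h0
    · subst h0
      simp only [Nat.cast_zero, zero_add]
      rw [C_zero, one_mul, C_one m hm, one_pow]
      exact C_two_le_one m hm
    · have hkey := key_ineq m hm ((N:ℤ)+1) (glc m hm (N:ℤ) hQ)
      have i1 : (N:ℤ) + 1 - 1 = (N:ℤ) := by ring
      have i2 : (N:ℤ) + 1 - 2 = ((N-1:ℕ):ℤ) := by omega
      have i3 : (N:ℤ) + 1 = ((N+1:ℕ):ℤ) := by omega
      rw [i1, i2] at hkey
      rw [show d m ((N:ℤ)+1) = d m (((N+1:ℕ)):ℤ) by rw [← i3]] at hkey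
      rw [d_eq m hm N, d_eq m hm (N-1), d_eq m hm (N+1)] at hkey
      have c1 : ((N-1:ℕ):ℤ) + 1 = (N:ℤ) := by omega
      have c2 : ((N-1:ℕ):ℚ) + 1 = (N:ℚ) := by
        exact_mod_cast congrArg (Nat.cast (R := ℚ)) (by omega : (N-1)+1 = N)
      have c3 : ((N+1:ℕ):ℤ) + 1 = (N:ℤ) + 2 := by omega
      have c4 : ((N+1:ℕ):ℚ) + 1 = (N:ℚ) + 2 := by push_cast; ring
      rw [c1, c2, c3, c4] at hkey
      have hdec : C m ((N:ℤ)+1) ≤ C m (N:ℤ) :=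
        cdec m hm (N:ℤ) hQ (N:ℤ) (by positivity) (by omega)
      have hCn := C_pos m hm (by positivity : (0:ℤ) ≤ (N:ℤ))
      have hCn1 := C_pos m hm (by positivity : (0:ℤ) ≤ (N:ℤ)+1)
      have hCn2 := C_nonneg m ((N:ℤ)+2)
      have hNQ : (0:ℚ) < (N:ℚ) := by exact_mod_cast h0
      have hs : (0:ℚ) < (N:ℚ) * ((N:ℚ)+2) := by positivity
      have h6 : (N:ℚ)*((N:ℚ)+2) * (C m (N:ℤ) * C m ((N:ℤ)+2))
          ≤ (N:ℚ)*((N:ℚ)+2) * (C m ((N:ℤ)+1)^2) := by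
        have hd2 := mul_le_mul_of_nonneg_right hdec (le_of_lt hCn1)
        nlinarith [hkey, hd2]
      exact le_of_mul_le_mul_left h6 hs

lemma glc_all (hm : 1 ≤ m) :
    ∀ a b : ℤ, a ≤ b → C m (a-1) * C m (b+1) ≤ C m a * C m b := by
  intro a b hab
  refine glc m hm b ?_ a b hab (by omega)
  intro i hi0 hiN
  have hi : (i.toNat : ℤ) = i := Int.toNat_of_nonneg hi0
  have := main m hm i.toNat
  rwa [hi] at this

lemma logconvex_q (hm : 1 ≤ m) (n : ℕ) :
    C m ((n:ℤ)+1) * d m (n:ℤ) ≤ C m (n:ℤ) * d m ((n:ℤ)+1) := by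
  have hd1 : d m ((n:ℤ)+1) = ∑ j ∈ K m, U m j * C m ((n:ℤ) + 1 - j) := by rw [d]
  rw [d, hd1, Finset.mul_sum, Finset.mul_sum]
  apply Finset.sum_le_sum
  intro j hj
  rcases eq_or_ne (U m j) 0 with hU | hU
  · rw [hU]
    simp
  · obtain ⟨hj0, hjm⟩ := U_supp m hU
    rcases eq_or_lt_of_le hj0 with h0 | h0
    · rw [← h0, sub_zero]
      have e : (n:ℤ) + 1 - 0 = (n:ℤ) + 1 := by ring
      rw [e]
      exact le_of_eq (by ring)
    · have h := glc_all m hm ((n:ℤ)+1-j) (n:ℤ) (by omega)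
      have e1 : (n:ℤ) + 1 - j - 1 = (n:ℤ) - j := by ring
      rw [e1] at h
      calc C m ((n:ℤ)+1) * (U m j * C m ((n:ℤ) - j))
          = U m j * (C m ((n:ℤ) - j) * C m ((n:ℤ)+1)) := by ring
        _ ≤ U m j * (C m ((n:ℤ)+1-j) * C m (n:ℤ)) :=
            mul_le_mul_of_nonneg_left h (U_nonneg m j)
        _ = C m (n:ℤ) * (U m j * C m ((n:ℤ)+1-j)) := by ring

end RBAnalytic


/-- For `m ≥ 1`, the sequence `(B_{n,≤m})` is log-convex and `(B_{n,≤m}/n!)` is log-concave. -/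
theorem restrictedBell_logConvex_logConcave (m : ℕ) (hm : 1 ≤ m) :
    (∀ n : ℕ, (restrictedBell (n + 1) m) ^ 2 ≤ restrictedBell n m * restrictedBell (n + 2) m) ∧
    (∀ n : ℕ,
      (restrictedBell n m : ℚ) / n.factorial *
          ((restrictedBell (n + 2) m : ℚ) / (n + 2).factorial) ≤
        ((restrictedBell (n + 1) m : ℚ) / (n + 1).factorial) ^ 2) := by
  constructor
  · intro n
    have h := RBAnalytic.logconvex_q m hm n
    rw [RBAnalytic.d_eq m hm n] at h
    have e : ((n:ℤ)+1) = ((n+1:ℕ):ℤ) := by push_cast; ring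
    rw [e] at h
    rw [RBAnalytic.d_eq m hm (n+1)] at h
    have e2 : (((n+1:ℕ)):ℤ)+1 = ((n+2:ℕ):ℤ) := by push_cast; ring
    rw [e2] at h
    rw [RBAnalytic.C_coe, RBAnalytic.C_coe, RBAnalytic.C_coe] at h
    have h1 : ((n+1).factorial : ℚ) = ((n:ℚ)+1) * (n.factorial : ℚ) := by
      have := congrArg (Nat.cast (R := ℚ)) (Nat.factorial_succ n)
      push_cast at this
      linear_combination this
    have h2 : ((n+2).factorial : ℚ) = ((n:ℚ)+2) * ((n+1).factorial : ℚ) := by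
      have := congrArg (Nat.cast (R := ℚ)) (Nat.factorial_succ (n+1))
      push_cast at this
      linear_combination this
    push_cast at h
    rw [h1, h2, h1] at h
    have ha : (0:ℚ) < (n.factorial : ℚ) := by positivity
    have hQ : ((restrictedBell (n+1) m : ℚ))^2
        ≤ (restrictedBell n m : ℚ) * (restrictedBell (n+2) m : ℚ) := by
      have hn1 : (0:ℚ) < (n:ℚ) + 1 := by positivity
      have hn2 : (0:ℚ) < (n:ℚ) + 2 := by positivity
      have hfne : (n.factorial:ℚ) ≠ 0 := ha.ne'
      have h1ne : ((n:ℚ)+1) ≠ 0 := hn1.ne'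
      have h2ne : ((n:ℚ)+2) ≠ 0 := hn2.ne'
      field_simp at h
      rw [show (n:ℚ)+1+1 = (n:ℚ)+2 by ring] at h
      have hc : (0:ℚ) < ((n:ℚ)+1)^2*((n:ℚ)+2)*(n.factorial:ℚ)^2 := by positivity
      refine le_of_mul_le_mul_left ?_ hc
      nlinarith [h, mul_le_mul_of_nonneg_left h (by positivity : (0:ℚ) ≤ ((n:ℚ)+1)^2*(n.factorial:ℚ)^2)]
    exact_mod_cast hQ
  · intro n
    have h := RBAnalytic.main m hm n
    have e1 : ((n:ℤ)+2) = ((n+2:ℕ):ℤ) := by push_cast; ring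
    have e2 : ((n:ℤ)+1) = ((n+1:ℕ):ℤ) := by push_cast; ring
    rw [e1, e2, RBAnalytic.C_coe, RBAnalytic.C_coe, RBAnalytic.C_coe] at h
    push_cast at h ⊢
    exact h
end

section
/- For every natural number n: if n ≡ 0 (mod 3) or n ≡ 2 (mod 3), then the associated Bell number B_{n,≥2} is odd (its 2-adic valuation is 0); and if n ≡ 1 (mod 3), then B_{n,≥2} is even. -/
namespace AB

open Finset


variable {α : Type*} [Fintype α] [DecidableEq α]

def NS {β : Type*} (c : Setoid β) : Prop := ∀ x : β, ∃ y, y ≠ x ∧ c.r x y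

def toSetoid (P : Finpartition (univ : Finset α)) : Setoid α where
  r x y := y ∈ P.part x
  iseqv := by
    constructor
    · intro x; exact P.mem_part (mem_univ x)
    · intro x y h
      have : P.part y = P.part x := P.part_eq_of_mem (P.part_mem.mpr (mem_univ x)) h
      rw [this]; exact P.mem_part (mem_univ x)
    · intro x y z hxy hyz
      have : P.part y = P.part x := P.part_eq_of_mem (P.part_mem.mpr (mem_univ x)) hxy
      rwa [this] at hyz

lemma part_eq_imp_eq {s : Finset α} (P Q : Finpartition s)
    (h : ∀ a ∈ s, P.part a = Q.part a) : P = Q := by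
  have key : ∀ (P Q : Finpartition s), (∀ a ∈ s, P.part a = Q.part a) →
      ∀ b ∈ P.parts, b ∈ Q.parts := by
    intro P Q h b hb
    obtain ⟨a, ha⟩ := P.nonempty_of_mem_parts hb
    have has : a ∈ s := P.le hb ha
    have : P.part a = b := P.part_eq_of_mem hb ha
    rw [← this, h a has]
    exact Q.part_mem.mpr has
  ext b
  exact ⟨fun hb => key P Q h b hb, fun hb => key Q P (fun a ha => (h a ha).symm) b hb⟩

noncomputable def fpEquiv : Finpartition (univ : Finset α) ≃ Setoid α where
  toFun := toSetoid
  invFun c := @Finpartition.ofSetoid α _ _ c (Classical.decRel _)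
  left_inv P := by
    apply part_eq_imp_eq
    intro a _
    ext y
    rw [@Finpartition.mem_part_ofSetoid_iff_rel α _ a _ (toSetoid P) (Classical.decRel _) y]
    exact Iff.rfl
  right_inv c := by
    ext x y
    exact @Finpartition.mem_part_ofSetoid_iff_rel α _ x _ c (Classical.decRel _) y

lemma NS_iff (P : Finpartition (univ : Finset α)) :
    (∀ b ∈ P.parts, 2 ≤ b.card) ↔ NS (toSetoid P) := by
  constructor
  · intro h x
    have hx := P.mem_part (mem_univ x)
    have h2 := h _ (P.part_mem.mpr (mem_univ x))
    obtain ⟨y, hy, hyx⟩ := Finset.exists_mem_ne (s := P.part x) (by omega) x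
    exact ⟨y, hyx, hy⟩
  · intro h b hb
    obtain ⟨a, ha⟩ := P.nonempty_of_mem_parts hb
    obtain ⟨y, hyx, hy⟩ := h a
    have hpa : P.part a = b := P.part_eq_of_mem hb ha
    have : y ∈ b := by rw [← hpa]; exact hy
    exact Finset.one_lt_card.mpr ⟨y, this, a, ha, hyx⟩

noncomputable def A (n : ℕ) : ℕ := Nat.card {c : Setoid (Fin n) // NS c}

lemma associatedBell_eq_A (n : ℕ) : associatedBell n 2 = A n :=
  Nat.card_congr (Equiv.subtypeEquiv fpEquiv (fun P => NS_iff P))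


lemma card_modEq_fixed {β : Type*} [Finite β] (f : β → β) (hf : Function.Involutive f) :
    Nat.card β ≡ Nat.card {x : β // f x = x} [MOD 2] := by
  classical
  cases nonempty_fintype β
  have hf2 : ∃ F : Function.End β, F = f ∧ F ^ 2 ^ 1 = 1 := by
    refine ⟨f, rfl, ?_⟩
    funext x
    show f (f x) = x
    exact hf x
  obtain ⟨F, hFf, hF⟩ := hf2
  have key := Equiv.Perm.card_fixedPoints_modEq (p := 2) (n := 1) hF
  have e1 : Nat.card β = Fintype.card β := Nat.card_eq_fintype_card
  have e2 : Nat.card {x : β // f x = x} = Fintype.card (Function.fixedPoints F) := by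
    rw [Nat.card_eq_fintype_card]
    apply Fintype.card_congr
    exact Equiv.subtypeEquivRight (fun x => by subst hFf; exact Iff.rfl)
  rw [e1, e2]
  exact key

instance setoidFinite {β : Type*} [Finite β] : Finite (Setoid β) :=
  Finite.of_injective (fun c => ⇑c) (fun c d h => Setoid.ext (fun a b => iff_of_eq (congrFun (congrFun h a) b)))

lemma card_split {β : Type*} [Finite β] (p q : β → Prop) :
    Nat.card {x : β // p x} =
      Nat.card {x : β // p x ∧ q x} + Nat.card {x : β // p x ∧ ¬ q x} := by
  classical
  rw [← Nat.card_sum]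
  apply Nat.card_congr
  calc {x : β // p x} ≃ {y : {x : β // p x} // q y.1} ⊕ {y : {x : β // p x} // ¬ q y.1} :=
        (Equiv.sumCompl _).symm
    _ ≃ {x : β // p x ∧ q x} ⊕ {x : β // p x ∧ ¬ q x} :=
        Equiv.sumCongr (Equiv.subtypeSubtypeEquivSubtypeInter p q)
          (Equiv.subtypeSubtypeEquivSubtypeInter p (fun x => ¬ q x))


lemma comap_eq_self_of_forall_rel {β : Type*} {c : Setoid β} {g : β → β}
    (h : ∀ z, c.r (g z) z) : Setoid.comap g c = c :=
  Setoid.ext fun a b =>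
    ⟨fun hg => c.trans' (c.trans' (c.symm' (h a)) hg) (h b),
     fun hc => c.trans' (h a) (c.trans' hc (c.symm' (h b)))⟩

lemma NS_comap {β : Type*} {c : Setoid β} (e : β ≃ β) (h : NS c) :
    NS (Setoid.comap e c) := by
  intro x
  obtain ⟨y, hy, hr⟩ := h (e x)
  refine ⟨e.symm y, fun hc => hy (by rw [← hc, Equiv.apply_symm_apply]), ?_⟩
  show c.r (e x) (e (e.symm y))
  rwa [Equiv.apply_symm_apply]

variable {n : ℕ}

lemma zero_ne_one' : (0 : Fin (n+2)) ≠ 1 := by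
  intro h
  have := congrArg Fin.val h
  simp at this

lemma fixed_iff {c : Setoid (Fin (n+2))} (h : NS c) :
    Setoid.comap (Equiv.swap 0 1) c = c ↔ c.r 0 1 := by
  constructor
  · intro heq
    obtain ⟨y, hy0, hr⟩ := h 0
    by_cases hy1 : y = 1
    · rwa [hy1] at hr
    · have h1y : c.r 1 y := by
        have := (Setoid.comap_rel (Equiv.swap 0 1) c 1 y)
        rw [heq] at this
        rw [this, Equiv.swap_apply_right, Equiv.swap_apply_of_ne_of_ne hy0 hy1]
        exact hr
      exact c.trans' hr (c.symm' h1y)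
  · intro h01
    apply comap_eq_self_of_forall_rel
    intro z
    by_cases hz0 : z = 0
    · subst hz0; rw [Equiv.swap_apply_left]; exact c.symm' h01
    · by_cases hz1 : z = 1
      · subst hz1; rw [Equiv.swap_apply_right]; exact h01
      · rw [Equiv.swap_apply_of_ne_of_ne hz0 hz1]

lemma swap_step (n : ℕ) :
    Nat.card {c : Setoid (Fin (n+2)) // NS c} ≡
    Nat.card {c : Setoid (Fin (n+2)) // NS c ∧ c.r 0 1} [MOD 2] := by
  set f : {c : Setoid (Fin (n+2)) // NS c} → {c : Setoid (Fin (n+2)) // NS c} :=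
    fun x => ⟨Setoid.comap (Equiv.swap 0 1) x.1, NS_comap _ x.2⟩ with hf
  have hinv : Function.Involutive f := by
    intro x
    apply Subtype.ext
    show Setoid.comap (Equiv.swap 0 1) (Setoid.comap (Equiv.swap 0 1) x.1) = x.1
    apply Setoid.ext
    intro a b
    show x.1.r (Equiv.swap 0 1 (Equiv.swap 0 1 a)) (Equiv.swap 0 1 (Equiv.swap 0 1 b)) ↔ _
    rw [Equiv.swap_apply_self, Equiv.swap_apply_self]
  refine (card_modEq_fixed f hinv).trans ?_
  have : Nat.card {x : {c : Setoid (Fin (n+2)) // NS c} // f x = x} =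
      Nat.card {c : Setoid (Fin (n+2)) // NS c ∧ c.r 0 1} := by
    apply Nat.card_congr
    refine ⟨fun x => ⟨x.1.1, x.1.2, (fixed_iff x.1.2).mp (congrArg Subtype.val x.2)⟩,
            fun y => ⟨⟨y.1, y.2.1⟩, Subtype.ext ((fixed_iff y.2.1).mpr y.2.2)⟩, ?_, ?_⟩
    · intro x; apply Subtype.ext; apply Subtype.ext; rfl
    · intro y; apply Subtype.ext; rfl
  rw [this]


def idn (n : ℕ) : Fin (n+1) → Fin (n+2) := Fin.cases 0 (fun k => k.succ.succ)
def fdn (n : ℕ) : Fin (n+2) → Fin (n+1) := Fin.cases 0 (Fin.cases 0 (fun k => k.succ))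
def jdn (n : ℕ) : Fin n → Fin (n+2) := fun k => k.succ.succ
def gdn (n : ℕ) : Fin (n+2) → Option (Fin n) := Fin.cases none (Fin.cases none some)

lemma idn_zero : idn n 0 = 0 := by simp [idn]
lemma idn_succ (k : Fin n) : idn n k.succ = k.succ.succ := by simp [idn]
lemma fdn_zero : fdn n 0 = 0 := by simp [fdn]
lemma one_eq_succ_zero : (1 : Fin (n+2)) = (0 : Fin (n+1)).succ := by
  rw [Fin.succ_zero_eq_one]
lemma fdn_one : fdn n 1 = 0 := rfl
lemma fdn_succ_succ (k : Fin n) : fdn n k.succ.succ = k.succ := by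
  simp [fdn]
lemma gdn_zero : gdn n 0 = none := by simp [gdn]
lemma gdn_one : gdn n 1 = none := rfl
lemma gdn_jdn (k : Fin n) : gdn n (jdn n k) = some k := by
  simp [gdn, jdn]

lemma fdn_idn (x : Fin (n+1)) : fdn n (idn n x) = x := by
  induction x using Fin.cases with
  | zero => rw [idn_zero, fdn_zero]
  | succ k => rw [idn_succ, fdn_succ_succ]

lemma idn_fdn {x : Fin (n+2)} (hx : x ≠ 1) : idn n (fdn n x) = x := by
  induction x using Fin.cases with
  | zero => rw [fdn_zero, idn_zero]
  | succ y =>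
    induction y using Fin.cases with
    | zero => exact absurd one_eq_succ_zero.symm hx
    | succ k => rw [fdn_succ_succ, idn_succ]

lemma idn_fdn_one : idn n (fdn n 1) = 0 := by rw [fdn_one, idn_zero]

lemma tri (x : Fin (n+2)) : x = 0 ∨ x = 1 ∨ ∃ k, x = jdn n k := by
  induction x using Fin.cases with
  | zero => exact Or.inl rfl
  | succ y =>
    induction y using Fin.cases with
    | zero => exact Or.inr (Or.inl one_eq_succ_zero.symm)
    | succ k => exact Or.inr (Or.inr ⟨k, rfl⟩)

lemma jdn_inj : Function.Injective (jdn n) := fun a b h => by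
  have := congrArg (gdn n) h
  rw [gdn_jdn, gdn_jdn] at this
  exact Option.some_injective _ this

lemma jdn_ne_zero (k : Fin n) : jdn n k ≠ 0 := fun h => by
  have := congrArg (gdn n) h; rw [gdn_jdn, gdn_zero] at this; cases this

lemma jdn_ne_one (k : Fin n) : jdn n k ≠ 1 := fun h => by
  have := congrArg (gdn n) h; rw [gdn_jdn, gdn_one] at this; cases this

lemma zero_ne_one'' : (0 : Fin (n+2)) ≠ 1 := by
  intro h
  have := congrArg Fin.val h
  simp at this

/-! ### Option setoid -/

def optS {β : Type*} (c : Setoid β) : Setoid (Option β) where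
  r o₁ o₂ := match o₁, o₂ with
    | none, none => True
    | some a, some b => c.r a b
    | _, _ => False
  iseqv := by
    constructor
    · intro o; cases o with
      | none => trivial
      | some a => exact c.refl' a
    · intro o₁ o₂ h
      cases o₁ <;> cases o₂
      · trivial
      · exact h.elim
      · exact h.elim
      · exact c.symm' h
    · intro o₁ o₂ o₃ h₁ h₂
      cases o₁ <;> cases o₂ <;> cases o₃ <;> first
        | trivial
        | exact h₁.elim
        | exact h₂.elim
        | exact c.trans' h₁ h₂

lemma optS_none_none {β : Type*} (c : Setoid β) : (optS c).r none none ↔ True := Iff.rfl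
lemma optS_none_some {β : Type*} (c : Setoid β) (b : β) : (optS c).r none (some b) ↔ False := Iff.rfl
lemma optS_some_none {β : Type*} (c : Setoid β) (a : β) : (optS c).r (some a) none ↔ False := Iff.rfl
lemma optS_some_some {β : Type*} (c : Setoid β) (a b : β) : (optS c).r (some a) (some b) ↔ c.r a b := Iff.rfl

/-! ### the two equivalences -/

def Q (c : Setoid (Fin (n+2))) : Prop := ∃ x, x ≠ 0 ∧ x ≠ 1 ∧ c.r 0 x

noncomputable def E2 : {c : Setoid (Fin (n+2)) // (NS c ∧ c.r 0 1) ∧ Q c} ≃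
    {c' : Setoid (Fin (n+1)) // NS c'} where
  toFun x := by
    obtain ⟨c, ⟨hNS, h01⟩, hQ⟩ := x
    refine ⟨Setoid.comap (idn n) c, ?_⟩
    intro x
    induction x using Fin.cases with
    | zero =>
      obtain ⟨z, hz0, hz1, hr⟩ := hQ
      refine ⟨fdn n z, ?_, ?_⟩
      · intro h
        apply hz0
        rw [← idn_fdn hz1, h, idn_zero]
      · show c.r (idn n 0) (idn n (fdn n z))
        rw [idn_zero, idn_fdn hz1]
        exact hr
    | succ k =>
      obtain ⟨w, hw, hr⟩ := hNS (idn n k.succ)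
      by_cases hw1 : w = 1
      · subst hw1
        refine ⟨0, ?_, ?_⟩
        · intro h
          exact Fin.succ_ne_zero k h.symm
        · show c.r (idn n k.succ) (idn n 0)
          rw [idn_zero]
          exact c.trans' hr (c.symm' h01)
      · refine ⟨fdn n w, ?_, ?_⟩
        · intro h
          apply hw
          rw [← idn_fdn hw1, h, idn_succ]
        · show c.r (idn n k.succ) (idn n (fdn n w))
          rw [idn_fdn hw1]
          exact hr
  invFun y := by
    obtain ⟨c', hNS⟩ := y
    refine ⟨Setoid.comap (fdn n) c', ⟨?_, ?_⟩, ?_⟩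
    · intro x
      obtain ⟨y', hy', hr⟩ := hNS (fdn n x)
      refine ⟨idn n y', ?_, ?_⟩
      · intro h
        apply hy'
        rw [← fdn_idn y', h]
      · show c'.r (fdn n x) (fdn n (idn n y'))
        rw [fdn_idn]
        exact hr
    · show c'.r (fdn n 0) (fdn n 1)
      rw [fdn_zero, fdn_one]
    · obtain ⟨y', hy', hr⟩ := hNS 0
      refine ⟨idn n y', ?_, ?_, ?_⟩
      · intro h
        apply hy'
        have := congrArg (fdn n) h
        rw [fdn_idn, fdn_zero] at this
        exact this
      · intro h
        apply hy'
        have := congrArg (fdn n) h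
        rw [fdn_idn, fdn_one] at this
        exact this
      · show c'.r (fdn n 0) (fdn n (idn n y'))
        rw [fdn_zero, fdn_idn]
        exact hr
  left_inv := by
    rintro ⟨c, ⟨hNS, h01⟩, hQ⟩
    apply Subtype.ext
    show Setoid.comap (fun z => idn n (fdn n z)) c = c
    apply comap_eq_self_of_forall_rel
    intro z
    by_cases hz : z = 1
    · subst hz
      rw [idn_fdn_one]
      exact h01
    · rw [idn_fdn hz]
  right_inv := by
    rintro ⟨c', hNS⟩
    apply Subtype.ext
    apply Setoid.ext
    intro a b
    show c'.r (fdn n (idn n a)) (fdn n (idn n b)) ↔ c'.r a b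
    rw [fdn_idn, fdn_idn]

noncomputable def E1 : {c : Setoid (Fin (n+2)) // (NS c ∧ c.r 0 1) ∧ ¬ Q c} ≃
    {c' : Setoid (Fin n) // NS c'} where
  toFun x := by
    obtain ⟨c, ⟨hNS, h01⟩, hQ⟩ := x
    refine ⟨Setoid.comap (jdn n) c, ?_⟩
    intro x
    obtain ⟨w, hw, hr⟩ := hNS (jdn n x)
    have hw0 : w ≠ 0 := by
      intro h; subst h
      exact hQ ⟨jdn n x, jdn_ne_zero x, jdn_ne_one x, c.symm' hr⟩
    have hw1 : w ≠ 1 := by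
      intro h; subst h
      exact hQ ⟨jdn n x, jdn_ne_zero x, jdn_ne_one x, c.trans' h01 (c.symm' hr)⟩
    rcases tri w with h | h | ⟨k, rfl⟩
    · exact absurd h hw0
    · exact absurd h hw1
    · exact ⟨k, fun h => hw (by rw [h]), hr⟩
  invFun y := by
    obtain ⟨c', hNS⟩ := y
    refine ⟨Setoid.comap (gdn n) (optS c'), ⟨?_, ?_⟩, ?_⟩
    · intro x
      rcases tri x with rfl | rfl | ⟨k, rfl⟩
      · refine ⟨1, fun h => zero_ne_one'' h.symm, ?_⟩
        show (optS c').r (gdn n 0) (gdn n 1)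
        rw [gdn_zero, gdn_one]
      · refine ⟨0, zero_ne_one'', ?_⟩
        show (optS c').r (gdn n 1) (gdn n 0)
        rw [gdn_zero, gdn_one]
      · obtain ⟨y', hy', hr⟩ := hNS k
        refine ⟨jdn n y', fun h => hy' (jdn_inj h), ?_⟩
        show (optS c').r (gdn n (jdn n k)) (gdn n (jdn n y'))
        rw [gdn_jdn, gdn_jdn]
        exact hr
    · show (optS c').r (gdn n 0) (gdn n 1)
      rw [gdn_zero, gdn_one]
    · rintro ⟨x, hx0, hx1, hr⟩
      rcases tri x with rfl | rfl | ⟨k, rfl⟩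
      · exact hx0 rfl
      · exact hx1 rfl
      · change (optS c').r (gdn n 0) (gdn n (jdn n k)) at hr
        rw [gdn_zero, gdn_jdn] at hr
        exact hr
  left_inv := by
    rintro ⟨c, ⟨hNS, h01⟩, hQ⟩
    apply Subtype.ext
    apply Setoid.ext
    intro a b
    show (optS (Setoid.comap (jdn n) c)).r (gdn n a) (gdn n b) ↔ c.r a b
    have hrel : ∀ u : Fin (n+2), (u = 0 ∨ u = 1) → c.r 0 u := by
      rintro u (rfl | rfl)
      · exact c.refl' 0
      · exact h01
    have hnotr : ∀ (u : Fin (n+2)) (k : Fin n), (u = 0 ∨ u = 1) → ¬ c.r u (jdn n k) := by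
      rintro u k hu hr
      exact hQ ⟨jdn n k, jdn_ne_zero k, jdn_ne_one k, c.trans' (hrel u hu) hr⟩
    rcases tri a with rfl | rfl | ⟨k, rfl⟩ <;> rcases tri b with rfl | rfl | ⟨l, rfl⟩
    · rw [gdn_zero]; simp only [optS_none_none, true_iff]; exact c.refl' 0
    · rw [gdn_zero, gdn_one]; simp only [optS_none_none, true_iff]; exact h01
    · rw [gdn_zero, gdn_jdn]
      simp only [optS_none_some, false_iff]
      exact hnotr 0 l (Or.inl rfl)
    · rw [gdn_zero, gdn_one]; simp only [optS_none_none, true_iff]; exact c.symm' h01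
    · rw [gdn_one]; simp only [optS_none_none, true_iff]; exact c.refl' 1
    · rw [gdn_one, gdn_jdn]
      simp only [optS_none_some, false_iff]
      exact hnotr 1 l (Or.inr rfl)
    · rw [gdn_zero, gdn_jdn]
      simp only [optS_some_none, false_iff]
      intro hr
      exact hnotr 0 k (Or.inl rfl) (c.symm' hr)
    · rw [gdn_one, gdn_jdn]
      simp only [optS_some_none, false_iff]
      intro hr
      exact hnotr 1 k (Or.inr rfl) (c.symm' hr)
    · rw [gdn_jdn, gdn_jdn]
      exact optS_some_some _ k l
  right_inv := by
    rintro ⟨c', hNS⟩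
    apply Subtype.ext
    apply Setoid.ext
    intro a b
    show (optS c').r (gdn n (jdn n a)) (gdn n (jdn n b)) ↔ c'.r a b
    rw [gdn_jdn, gdn_jdn]
    exact optS_some_some _ a b


/-! ### base cases and recurrence -/

lemma A_zero : A 0 = 1 := by
  haveI : Nonempty {c : Setoid (Fin 0) // NS c} := ⟨⟨⊤, fun x => x.elim0⟩⟩
  haveI : Subsingleton {c : Setoid (Fin 0) // NS c} := by
    constructor
    rintro ⟨c, _⟩ ⟨d, _⟩
    apply Subtype.ext
    apply Setoid.ext
    intro a b
    exact a.elim0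
  exact Nat.card_unique

lemma A_one : A 1 = 0 := by
  haveI : IsEmpty {c : Setoid (Fin 1) // NS c} := by
    constructor
    rintro ⟨c, h⟩
    obtain ⟨y, hy, _⟩ := h 0
    exact hy (Subsingleton.elim y 0)
  exact Nat.card_of_isEmpty

lemma A_rec (n : ℕ) : A (n+2) % 2 = (A (n+1) + A n) % 2 := by
  have h1 := swap_step n
  have h2 := card_split (β := Setoid (Fin (n+2))) (fun c => NS c ∧ c.r 0 1) Q
  have h3 : Nat.card {c : Setoid (Fin (n+2)) // (NS c ∧ c.r 0 1) ∧ Q c}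
      = A (n+1) := Nat.card_congr E2
  have h4 : Nat.card {c : Setoid (Fin (n+2)) // (NS c ∧ c.r 0 1) ∧ ¬ Q c}
      = A n := Nat.card_congr E1
  calc A (n+2) % 2 = Nat.card {c : Setoid (Fin (n+2)) // NS c ∧ c.r 0 1} % 2 := h1
    _ = (A (n+1) + A n) % 2 := by rw [h2, h3, h4]

lemma A_parity (n : ℕ) : A n % 2 = if n % 3 = 1 then 0 else 1 := by
  induction n using Nat.strong_induction_on with
  | _ n ih =>
    rcases n with _ | _ | m
    · rw [A_zero]; norm_num
    · rw [A_one]; norm_num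
    · rw [show m + 1 + 1 = m + 2 from rfl, A_rec m, Nat.add_mod,
        ih (m+1) (by omega), ih m (by omega)]
      have h3 : m % 3 = 0 ∨ m % 3 = 1 ∨ m % 3 = 2 := by omega
      rcases h3 with h | h | h
      · have e1 : (m+1) % 3 = 1 := by omega
        have e2 : (m+2) % 3 = 2 := by omega
        rw [e1, e2, h]; norm_num
      · have e1 : (m+1) % 3 = 2 := by omega
        have e2 : (m+2) % 3 = 0 := by omega
        rw [e1, e2, h]; norm_num
      · have e1 : (m+1) % 3 = 0 := by omega
        have e2 : (m+2) % 3 = 1 := by omega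
        rw [e1, e2, h]; norm_num

end AB

/-- If `n ≡ 0` or `n ≡ 2 (mod 3)` then `B_{n,≥2}` is odd (its 2-adic valuation is 0);
if `n ≡ 1 (mod 3)` then `B_{n,≥2}` is even. -/
theorem associatedBell_two_parity (n : ℕ) :
    ((n % 3 = 0 ∨ n % 3 = 2) → Odd (associatedBell n 2)) ∧
    (n % 3 = 1 → Even (associatedBell n 2)) := by
  have he : associatedBell n 2 = AB.A n := AB.associatedBell_eq_A n
  have h := AB.A_parity n
  constructor
  · intro hn
    rw [Nat.odd_iff, he, h, if_neg (by omega)]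
  · intro hn
    rw [Nat.even_iff, he, h, if_pos hn]
end

section
/- The 2-adic valuation of the associated factorial numbers A_{n,≥2} satisfies: ν₂(A_{2k,≥2}) = 0 for every k ≥ 0 (i.e. A_{n,≥2} is odd when n is even), and ν₂(A_{2k+1,≥2}) = ν₂(k) + 1 for every k ≥ 1. -/
lemma assocFact_eq_numDerangements (n : ℕ) :
    associatedFactorial n 2 = numDerangements n := by
  rw [← card_derangements_fin_eq_numDerangements, associatedFactorial,
    ← Nat.card_eq_fintype_card]
  apply Nat.card_congr
  apply Equiv.subtypeEquivRight
  intro σ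
  constructor
  · intro h x hx
    have := h x
    have h1 : Function.minimalPeriod σ x = 1 :=
      Function.minimalPeriod_eq_one_iff_isFixedPt.2 hx
    omega
  · intro h x
    have hper : x ∈ Function.periodicPts σ := by
      refine Function.mk_mem_periodicPts (orderOf_pos σ) ?_
      show σ^[orderOf σ] x = x
      simp [Equiv.Perm.iterate_eq_pow, pow_orderOf_eq_one]
    have hpos := Function.minimalPeriod_pos_of_mem_periodicPts hper
    have h1 : Function.minimalPeriod σ x ≠ 1 := by
      intro h1
      exact h x (Function.minimalPeriod_eq_one_iff_isFixedPt.1 h1)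
    omega

lemma derangement_parity (n : ℕ) : numDerangements n % 2 = (n + 1) % 2 := by
  induction n using Nat.strong_induction_on with
  | _ n ih =>
    match n with
    | 0 => rfl
    | 1 => rfl
    | (m + 2) =>
      have h1 := ih m (by omega)
      have h2 := ih (m + 1) (by omega)
      rw [numDerangements_add_two, Nat.mul_mod, Nat.add_mod (numDerangements m), h1, h2]
      rcases Nat.mod_two_eq_zero_or_one (m + 1) with h | h <;>
        rw [h] <;> omega


/-- The 2-adic valuation of the derangement numbers `A_{n,≥2}`: it is `0` when `n = 2k` is
even, and equals `ν₂(k) + 1` when `n = 2k + 1` with `k ≥ 1`. -/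
theorem padicValNat_two_associatedFactorial_two :
    (∀ k : ℕ, padicValNat 2 (associatedFactorial (2 * k) 2) = 0) ∧
    (∀ k : ℕ, 1 ≤ k →
      padicValNat 2 (associatedFactorial (2 * k + 1) 2) = padicValNat 2 k + 1) := by
  constructor
  · intro k
    rw [assocFact_eq_numDerangements]
    apply padicValNat.eq_zero_of_not_dvd
    have := derangement_parity (2 * k)
    omega
  · intro k hk
    obtain ⟨m, rfl⟩ : ∃ m, k = m + 1 := ⟨k - 1, by omega⟩
    rw [assocFact_eq_numDerangements]
    have hrec : numDerangements (2 * (m + 1) + 1) =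
        (2 * m + 1 + 1) * (numDerangements (2 * m + 1) + numDerangements (2 * m + 1 + 1)) := by
      rw [show 2 * (m + 1) + 1 = 2 * m + 1 + 2 by ring]
      exact numDerangements_add_two _
    have hodd : (numDerangements (2 * m + 1) + numDerangements (2 * m + 1 + 1)) % 2 = 1 := by
      have h1 := derangement_parity (2 * m + 1)
      have h2 := derangement_parity (2 * m + 1 + 1)
      omega
    have h0 : padicValNat 2 (numDerangements (2 * m + 1) + numDerangements (2 * m + 1 + 1)) = 0 :=
      padicValNat.eq_zero_of_not_dvd (by omega)
    rw [hrec, padicValNat.mul (by omega) (by omega), h0,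
      show 2 * m + 1 + 1 = 2 * (m + 1) by ring,
      padicValNat.mul (by omega) (by omega), padicValNat.self (by omega)]
    ring
end

section
/- The 2-adic valuation of the restricted factorial numbers A_{n,≤3} satisfies, for every n ≥ 1: ν₂(A_{n,≤3}) = k if n = 4k, ν₂(A_{n,≤3}) = k if n = 4k+1, ν₂(A_{n,≤3}) = k+1 if n = 4k+2, and ν₂(A_{n,≤3}) = k+1 if n = 4k+3. -/
open Equiv Function

lemma mp_semiconj {α β : Type*} {f : α → α} {g : β → β} {h : α → β}
    (hinj : Function.Injective h) (hs : ∀ x, g (h x) = h (f x)) (x : α) :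
    minimalPeriod g (h x) = minimalPeriod f x := by
  rw [minimalPeriod_eq_minimalPeriod_iff]
  intro n
  have key : g^[n] (h x) = h (f^[n] x) := by
    induction n with
    | zero => simp
    | succ n ih => rw [Function.iterate_succ_apply', Function.iterate_succ_apply', ih, hs]
  simp only [IsPeriodicPt, IsFixedPt, key]
  exact hinj.eq_iff

lemma mp_congr_on {β : Type*} {σ₁ σ₂ : β → β} {S : Set β}
    (hS : ∀ y ∈ S, σ₂ y ∈ S) (hag : ∀ y ∈ S, σ₁ y = σ₂ y) {x : β} (hx : x ∈ S) :
    minimalPeriod σ₁ x = minimalPeriod σ₂ x := by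
  rw [minimalPeriod_eq_minimalPeriod_iff]
  have key : ∀ n, σ₂^[n] x ∈ S ∧ σ₁^[n] x = σ₂^[n] x := by
    intro n
    induction n with
    | zero => exact ⟨hx, rfl⟩
    | succ n ih =>
      rw [Function.iterate_succ_apply', Function.iterate_succ_apply', ih.2]
      exact ⟨hS _ ih.1, hag _ ih.1⟩
  intro n
  simp only [IsPeriodicPt, IsFixedPt, (key n).2]

/-- The property that all cycles have length at most 3. -/
def PP {γ : Type*} (σ : Equiv.Perm γ) : Prop := ∀ x, minimalPeriod σ x ≤ 3

lemma mp_fixed {γ : Type*} {f : γ → γ} {x : γ} (h : f x = x) : minimalPeriod f x ≤ 3 :=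
  le_trans (IsPeriodicPt.minimalPeriod_le one_pos (by simpa [IsPeriodicPt, IsFixedPt])) (by norm_num)

lemma mp_optionCongr_some {α : Type*} (τ : Equiv.Perm α) (x : α) :
    minimalPeriod (⇑(Equiv.optionCongr τ)) (some x) = minimalPeriod (⇑τ) x :=
  mp_semiconj (Option.some_injective α) (fun y => by simp) x

lemma mp_val {α : Type*} [DecidableEq α] {p : α → Prop} [DecidablePred p] (f : Equiv.Perm (Subtype p)) (x : Subtype p) :
    minimalPeriod (⇑(Equiv.Perm.ofSubtype f)) (x : α) = minimalPeriod (⇑f) x :=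
  mp_semiconj Subtype.val_injective (fun y => Equiv.Perm.ofSubtype_apply_coe f y) x

lemma PP_ofSubtype_iff {α : Type*} [DecidableEq α] {p : α → Prop} [DecidablePred p]
    (f : Equiv.Perm (Subtype p)) : PP (Equiv.Perm.ofSubtype f) ↔ PP f := by
  constructor
  · intro h x
    rw [← mp_val f x]
    exact h _
  · intro h x
    by_cases hx : p x
    · rw [show x = ((⟨x, hx⟩ : Subtype p) : α) from rfl, mp_val]
      exact h _
    · exact mp_fixed (Equiv.Perm.ofSubtype_apply_of_not_mem f hx)

lemma fix_card {α : Type*} [Fintype α] [DecidableEq α] (p : α → Prop) [DecidablePred p] :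
    Nat.card {τ : Equiv.Perm α // PP τ ∧ ∀ x, ¬ p x → τ x = x} =
      Nat.card {σ : Equiv.Perm (Subtype p) // PP σ} := by
  refine (Nat.card_congr ?_).symm
  refine Equiv.trans ((Equiv.Perm.subtypeEquivSubtypePerm p).subtypeEquiv
    (q := fun g => PP g.1) (fun f => (PP_ofSubtype_iff f).symm)) ?_
  refine Equiv.trans (Equiv.subtypeSubtypeEquivSubtypeInter _ _) (Equiv.subtypeEquivRight ?_)
  intro τ
  exact and_comm

lemma N_congr {α β : Type*} [Fintype α] [DecidableEq α] [Fintype β] [DecidableEq β] (e : α ≃ β) :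
    Nat.card {σ : Equiv.Perm α // PP σ} = Nat.card {σ : Equiv.Perm β // PP σ} := by
  refine Nat.card_congr ((e.permCongr).subtypeEquiv (fun σ => ?_))
  constructor
  · intro h y
    have := mp_semiconj e.injective (fun x => by simp) (e.symm y) (f := ⇑σ) (g := ⇑(e.permCongr σ))
    rw [e.apply_symm_apply] at this
    rw [this]
    exact h _
  · intro h x
    rw [← mp_semiconj e.injective (fun z => by simp) x (f := ⇑σ) (g := ⇑(e.permCongr σ))]
    exact h _

lemma mp_two {γ : Type*} {f : γ → γ} {x : γ} (h2 : f (f x) = x) : minimalPeriod f x ≤ 3 := by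
  refine le_trans (IsPeriodicPt.minimalPeriod_le two_pos ?_) (by norm_num)
  show f^[2] x = x
  rw [Function.iterate_succ_apply', Function.iterate_one, h2]

lemma mp_three {γ : Type*} {f : γ → γ} {x : γ} (h3 : f (f (f x)) = x) : minimalPeriod f x ≤ 3 := by
  refine IsPeriodicPt.minimalPeriod_le (by norm_num) ?_
  show f^[3] x = x
  rw [Function.iterate_succ_apply', Function.iterate_succ_apply', Function.iterate_one, h3]

section Master

variable {α : Type*} [Fintype α] [DecidableEq α]

/-- B-piece embedding -/
def PsiB (a : α) (τ : Equiv.Perm α) : Equiv.Perm (Option α) :=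
  Equiv.swap none (some a) * Equiv.optionCongr τ

/-- C-piece embedding -/
def PsiC (a b : α) (τ : Equiv.Perm α) : Equiv.Perm (Option α) :=
  Equiv.swap none (some b) * (Equiv.swap none (some a) * Equiv.optionCongr τ)

lemma PsiB_none (a : α) (τ : Equiv.Perm α) : PsiB a τ none = some a := by
  simp [PsiB]

lemma PsiB_some_self (a : α) (τ : Equiv.Perm α) (ha : τ a = a) : PsiB a τ (some a) = none := by
  simp [PsiB, ha]

lemma PsiB_some (a : α) (τ : Equiv.Perm α) (x : α) (hx : τ x ≠ a) :
    PsiB a τ (some x) = some (τ x) := by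
  simp only [PsiB, Equiv.Perm.mul_apply, Equiv.optionCongr_apply, Option.map_some]
  exact Equiv.swap_apply_of_ne_of_ne (by simp) (by simpa)

lemma PsiC_none (a b : α) (τ : Equiv.Perm α) (hba : b ≠ a) : PsiC a b τ none = some a := by
  simp only [PsiC, Equiv.Perm.mul_apply, Equiv.optionCongr_apply, Option.map_none,
    Equiv.swap_apply_left]
  exact Equiv.swap_apply_of_ne_of_ne (by simp) (by simpa using hba.symm)

lemma PsiC_some_a (a b : α) (τ : Equiv.Perm α) (ha : τ a = a) :
    PsiC a b τ (some a) = some b := by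
  simp [PsiC, ha]

lemma PsiC_some_b (a b : α) (τ : Equiv.Perm α) (hba : b ≠ a) (hb : τ b = b) :
    PsiC a b τ (some b) = none := by
  simp only [PsiC, Equiv.Perm.mul_apply, Equiv.optionCongr_apply, Option.map_some, hb]
  rw [show Equiv.swap (none : Option α) (some a) (some b) = some b from
    Equiv.swap_apply_of_ne_of_ne (by simp) (by simpa), Equiv.swap_apply_right]

lemma PsiC_some (a b : α) (τ : Equiv.Perm α) (x : α) (hxa : τ x ≠ a) (hxb : τ x ≠ b) :
    PsiC a b τ (some x) = some (τ x) := by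
  simp only [PsiC, Equiv.Perm.mul_apply, Equiv.optionCongr_apply, Option.map_some]
  rw [show Equiv.swap (none : Option α) (some a) (some (τ x)) = some (τ x) from
    Equiv.swap_apply_of_ne_of_ne (by simp) (by simpa),
    Equiv.swap_apply_of_ne_of_ne (by simp) (by simpa)]

lemma PP_PsiA (τ : Equiv.Perm α) (h : PP τ) : PP (Equiv.optionCongr τ) := by
  rintro (_ | x)
  · exact mp_fixed (by simp)
  · rw [mp_optionCongr_some]
    exact h x

lemma PP_PsiB (a : α) (τ : Equiv.Perm α) (hP : PP τ) (ha : τ a = a) : PP (PsiB a τ) := by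
  rintro (_ | x)
  · exact mp_two (by rw [PsiB_none, PsiB_some_self a τ ha])
  · by_cases hx : x = a
    · rw [hx]
      exact mp_two (by rw [PsiB_some_self a τ ha, PsiB_none])
    · have key : minimalPeriod (⇑(PsiB a τ)) (some x)
          = minimalPeriod (⇑(Equiv.optionCongr τ)) (some x) := by
        refine mp_congr_on (S := {y : Option α | y ≠ none ∧ y ≠ some a}) ?_ ?_ ⟨by simp, by simpa⟩
        · rintro (_ | z) ⟨h1, h2⟩
          · exact absurd rfl h1
          · have hz : z ≠ a := by simpa using h2
            have : τ z ≠ a := fun hc => hz (τ.injective (by rw [hc, ha]))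
            exact ⟨by simp, by simpa⟩
        · rintro (_ | z) ⟨h1, h2⟩
          · exact absurd rfl h1
          · have hz : z ≠ a := by simpa using h2
            have : τ z ≠ a := fun hc => hz (τ.injective (by rw [hc, ha]))
            rw [PsiB_some a τ z this]
            simp
      rw [key, mp_optionCongr_some]
      exact hP x

lemma PP_PsiC (a b : α) (τ : Equiv.Perm α) (hba : b ≠ a) (hP : PP τ) (ha : τ a = a)
    (hb : τ b = b) : PP (PsiC a b τ) := by
  have hcyc : ∀ y : Option α, y = none ∨ y = some a ∨ y = some b →
      (PsiC a b τ) ((PsiC a b τ) ((PsiC a b τ) y)) = y := by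
    rintro y (rfl | rfl | rfl)
    · rw [PsiC_none a b τ hba, PsiC_some_a a b τ ha, PsiC_some_b a b τ hba hb]
    · rw [PsiC_some_a a b τ ha, PsiC_some_b a b τ hba hb, PsiC_none a b τ hba]
    · rw [PsiC_some_b a b τ hba hb, PsiC_none a b τ hba, PsiC_some_a a b τ ha]
  rintro (_ | x)
  · exact mp_three (hcyc none (Or.inl rfl))
  · by_cases hxa : x = a
    · rw [hxa]; exact mp_three (hcyc _ (Or.inr (Or.inl rfl)))
    · by_cases hxb : x = b
      · rw [hxb]; exact mp_three (hcyc _ (Or.inr (Or.inr rfl)))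
      · have key : minimalPeriod (⇑(PsiC a b τ)) (some x)
            = minimalPeriod (⇑(Equiv.optionCongr τ)) (some x) := by
          refine mp_congr_on (S := {y : Option α | y ≠ none ∧ y ≠ some a ∧ y ≠ some b}) ?_ ?_
            ⟨by simp, by simpa, by simpa⟩
          · rintro (_ | z) ⟨h1, h2, h3⟩
            · exact absurd rfl h1
            · have hza : z ≠ a := by simpa using h2
              have hzb : z ≠ b := by simpa using h3
              refine ⟨by simp, ?_, ?_⟩
              · have : τ z ≠ a := fun hc => hza (τ.injective (by rw [hc, ha]))
                simpa
              · have : τ z ≠ b := fun hc => hzb (τ.injective (by rw [hc, hb]))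
                simpa
          · rintro (_ | z) ⟨h1, h2, h3⟩
            · exact absurd rfl h1
            · have hza : z ≠ a := by simpa using h2
              have hzb : z ≠ b := by simpa using h3
              rw [PsiC_some a b τ z (fun hc => hza (τ.injective (by rw [hc, ha])))
                (fun hc => hzb (τ.injective (by rw [hc, hb])))]
              simp
        rw [key, mp_optionCongr_some]
        exact hP x

end Master

section Master2

variable {α : Type*} [Fintype α] [DecidableEq α]

/-- the decomposition domain -/
def Dom (α : Type*) [Fintype α] [DecidableEq α] : Type _ :=
  {τ : Equiv.Perm α // PP τ} ⊕
    ((Σ a : α, {τ : Equiv.Perm α // PP τ ∧ τ a = a}) ⊕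
      (Σ a : α, Σ _b : {b : α // b ≠ a},
        {τ : Equiv.Perm α // PP τ ∧ τ a = a ∧ τ _b.1 = _b.1}))

/-- The classification map. -/
def Psi : Dom α → {σ : Equiv.Perm (Option α) // PP σ}
  | Sum.inl t => ⟨Equiv.optionCongr t.1, PP_PsiA t.1 t.2⟩
  | Sum.inr (Sum.inl t) => ⟨PsiB t.1 t.2.1, PP_PsiB t.1 t.2.1 t.2.2.1 t.2.2.2⟩
  | Sum.inr (Sum.inr t) => ⟨PsiC t.1 t.2.1.1 t.2.2.1,
      PP_PsiC t.1 t.2.1.1 t.2.2.1 t.2.1.2 t.2.2.2.1 t.2.2.2.2.1 t.2.2.2.2.2⟩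

lemma perm_mp_pos {γ : Type*} [Fintype γ] (σ : Equiv.Perm γ) (x : γ) :
    0 < minimalPeriod (⇑σ) x := by
  refine IsPeriodicPt.minimalPeriod_pos (orderOf_pos σ) ?_
  show (⇑σ)^[orderOf σ] x = x
  rw [Equiv.Perm.iterate_eq_pow, pow_orderOf_eq_one]
  rfl

lemma Psi_surj : Function.Surjective (Psi (α := α)) := by
  rintro ⟨σ, hP⟩
  rcases hn : σ none with _ | a
  · -- fixed point case
    have hστ : Equiv.optionCongr (Equiv.removeNone σ) = σ := by
      rw [map_equiv_removeNone, hn, Equiv.swap_self]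
      ext y; simp
    refine ⟨Sum.inl ⟨Equiv.removeNone σ, ?_⟩, ?_⟩
    · intro x
      rw [← mp_optionCongr_some, hστ]
      exact hP _
    · exact Subtype.ext hστ
  · rcases ha : σ (some a) with _ | b
    · -- 2-cycle case
      set ρ := Equiv.swap none (some a) * σ with hρ
      have hρn : ρ none = none := by
        rw [hρ]; simp [hn]
      have hρτ : Equiv.optionCongr (Equiv.removeNone ρ) = ρ := by
        rw [map_equiv_removeNone, hρn, Equiv.swap_self]
        ext y; simp
      set τ := Equiv.removeNone ρ with hτ
      have hmem : ∀ y : Option α, y ≠ none → y ≠ some a → (σ y ≠ none ∧ σ y ≠ some a) := by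
        intro y h1 h2
        constructor
        · intro hc
          exact h2 (σ.injective (by rw [hc, ha]))
        · intro hc
          exact h1 (σ.injective (by rw [hc, hn]))
      have hagree : ∀ y : Option α, y ≠ none → y ≠ some a → ρ y = σ y := by
        intro y h1 h2
        obtain ⟨k1, k2⟩ := hmem y h1 h2
        rw [hρ]
        exact Equiv.swap_apply_of_ne_of_ne k1 k2
      have hτa : τ a = a := by
        have : Equiv.optionCongr τ (some a) = some a := by
          rw [hρτ, hρ]
          simp [ha]
        simpa using this
      have hPτ : PP τ := by
        intro x
        by_cases hx : x = a
        · rw [hx]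
          exact mp_fixed hτa
        · have h1 : minimalPeriod (⇑τ) x = minimalPeriod (⇑(Equiv.optionCongr τ)) (some x) :=
            (mp_optionCongr_some τ x).symm
          rw [h1, hρτ]
          have h2 : minimalPeriod (⇑ρ) (some x) = minimalPeriod (⇑σ) (some x) := by
            refine mp_congr_on (S := {y : Option α | y ≠ none ∧ y ≠ some a}) ?_ ?_
              ⟨by simp, by simpa⟩
            · rintro y ⟨h1', h2'⟩
              exact hmem y h1' h2'
            · rintro y ⟨h1', h2'⟩
              exact hagree y h1' h2'
          rw [h2]
          exact hP _
      refine ⟨Sum.inr (Sum.inl ⟨a, τ, hPτ, hτa⟩), Subtype.ext ?_⟩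
      show PsiB a τ = σ
      rw [PsiB, hρτ, hρ, ← mul_assoc, Equiv.swap_mul_self, one_mul]
    · -- 3-cycle case
      have hba : b ≠ a := by
        intro h
        rw [h] at ha
        have := σ.injective (ha.trans hn.symm)
        simp at this
      have h2iter : (⇑σ)^[2] none = some b := by
        rw [Function.iterate_succ_apply', Function.iterate_one, hn, ha]
      have hm3 : minimalPeriod (⇑σ) none = 3 := by
        have hpos := perm_mp_pos σ none
        have hle := hP none
        have h1 : minimalPeriod (⇑σ) none ≠ 1 := by
          intro h
          rw [minimalPeriod_eq_one_iff_isFixedPt] at h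
          rw [show IsFixedPt (⇑σ) none = (σ none = none) from rfl, hn] at h
          simp at h
        have h2 : minimalPeriod (⇑σ) none ≠ 2 := by
          intro h
          have := isPeriodicPt_minimalPeriod (⇑σ) none
          rw [h] at this
          rw [IsPeriodicPt, IsFixedPt, h2iter] at this
          simp at this
        omega
      have hb' : σ (some b) = none := by
        have := isPeriodicPt_minimalPeriod (⇑σ) none
        rw [hm3] at this
        rw [IsPeriodicPt, IsFixedPt, Function.iterate_succ_apply', h2iter] at this
        exact this
      set ρ := Equiv.swap none (some a) * (Equiv.swap none (some b) * σ) with hρ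
      have hρn : ρ none = none := by
        rw [hρ]
        simp only [Equiv.Perm.mul_apply, hn]
        rw [show Equiv.swap (none : Option α) (some b) (some a) = some a from
          Equiv.swap_apply_of_ne_of_ne (by simp) (by simpa using hba.symm),
          Equiv.swap_apply_right]
      have hρτ : Equiv.optionCongr (Equiv.removeNone ρ) = ρ := by
        rw [map_equiv_removeNone, hρn, Equiv.swap_self]
        ext y; simp
      set τ := Equiv.removeNone ρ with hτ
      have hmem : ∀ y : Option α, y ≠ none → y ≠ some a → y ≠ some b →
          (σ y ≠ none ∧ σ y ≠ some a ∧ σ y ≠ some b) := by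
        intro y h1 h2 h3
        refine ⟨?_, ?_, ?_⟩
        · intro hc
          exact h3 (σ.injective (by rw [hc, hb']))
        · intro hc
          exact h1 (σ.injective (by rw [hc, hn]))
        · intro hc
          exact h2 (σ.injective (by rw [hc, ha]))
      have hagree : ∀ y : Option α, y ≠ none → y ≠ some a → y ≠ some b → ρ y = σ y := by
        intro y h1 h2 h3
        obtain ⟨k1, k2, k3⟩ := hmem y h1 h2 h3
        rw [hρ]
        simp only [Equiv.Perm.mul_apply]
        rw [Equiv.swap_apply_of_ne_of_ne k1 k3, Equiv.swap_apply_of_ne_of_ne k1 k2]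
      have hτa : τ a = a := by
        have : Equiv.optionCongr τ (some a) = some a := by
          rw [hρτ, hρ]
          simp only [Equiv.Perm.mul_apply, ha]
          rw [Equiv.swap_apply_right, Equiv.swap_apply_left]
        simpa using this
      have hτb : τ b = b := by
        have : Equiv.optionCongr τ (some b) = some b := by
          rw [hρτ, hρ]
          simp only [Equiv.Perm.mul_apply, hb']
          rw [Equiv.swap_apply_left]
          exact Equiv.swap_apply_of_ne_of_ne (by simp) (by simpa)
        simpa using this
      have hPτ : PP τ := by
        intro x
        by_cases hxa : x = a
        · rw [hxa]
          exact mp_fixed hτa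
        · by_cases hxb : x = b
          · rw [hxb]
            exact mp_fixed hτb
          · have h1 : minimalPeriod (⇑τ) x = minimalPeriod (⇑(Equiv.optionCongr τ)) (some x) :=
              (mp_optionCongr_some τ x).symm
            rw [h1, hρτ]
            have h2 : minimalPeriod (⇑ρ) (some x) = minimalPeriod (⇑σ) (some x) := by
              refine mp_congr_on (S := {y : Option α | y ≠ none ∧ y ≠ some a ∧ y ≠ some b}) ?_ ?_
                ⟨by simp, by simpa, by simpa⟩
              · rintro y ⟨k1, k2, k3⟩
                exact hmem y k1 k2 k3
              · rintro y ⟨k1, k2, k3⟩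
                exact hagree y k1 k2 k3
            rw [h2]
            exact hP _
      refine ⟨Sum.inr (Sum.inr ⟨a, ⟨b, hba⟩, τ, hPτ, hτa, hτb⟩), Subtype.ext ?_⟩
      show PsiC a b τ = σ
      rw [PsiC, hρτ, hρ, Equiv.swap_mul_self_mul, Equiv.swap_mul_self_mul]

end Master2

section Master3
variable {α : Type*} [Fintype α] [DecidableEq α]

lemma Psi_inj : Function.Injective (Psi (α := α)) := by
  rintro (⟨τ₁, h₁⟩ | ⟨a₁, τ₁, hP₁, ha₁⟩ | ⟨a₁, ⟨b₁, hba₁⟩, τ₁, hP₁, ha₁, hb₁⟩)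
    (⟨τ₂, h₂⟩ | ⟨a₂, τ₂, hP₂, ha₂⟩ | ⟨a₂, ⟨b₂, hba₂⟩, τ₂, hP₂, ha₂, hb₂⟩) h <;>
    simp only [Psi, Subtype.mk.injEq] at h <;>
    rename' h => hval <;>
    have hfun := Equiv.ext_iff.mp hval
  · -- A A
    obtain rfl : τ₁ = τ₂ := Equiv.optionCongr_injective hval
    rfl
  · -- A B
    have := hfun none
    rw [show (Equiv.optionCongr τ₁) none = none by simp, PsiB_none] at this
    simp at this
  · -- A C
    have := hfun none
    rw [show (Equiv.optionCongr τ₁) none = none by simp, PsiC_none a₂ b₂ τ₂ hba₂] at this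
    simp at this
  · -- B A
    have := hfun none
    rw [show (Equiv.optionCongr τ₂) none = none by simp, PsiB_none] at this
    simp at this
  · -- B B
    obtain rfl : a₁ = a₂ := by
      have := hfun none
      rw [PsiB_none, PsiB_none] at this
      simpa using this
    obtain rfl : τ₁ = τ₂ := Equiv.optionCongr_injective (mul_left_cancel hval)
    rfl
  · -- B C
    obtain rfl : a₁ = a₂ := by
      have := hfun none
      rw [PsiB_none, PsiC_none a₂ b₂ τ₂ hba₂] at this
      simpa using this
    have := hfun (some a₁)
    rw [PsiB_some_self a₁ τ₁ ha₁, PsiC_some_a a₁ b₂ τ₂ ha₂] at this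
    simp at this
  · -- C A
    have := hfun none
    rw [show (Equiv.optionCongr τ₂) none = none by simp, PsiC_none a₁ b₁ τ₁ hba₁] at this
    simp at this
  · -- C B
    obtain rfl : a₁ = a₂ := by
      have := hfun none
      rw [PsiB_none, PsiC_none a₁ b₁ τ₁ hba₁] at this
      simpa using this
    have := hfun (some a₁)
    rw [PsiB_some_self a₁ τ₂ ha₂, PsiC_some_a a₁ b₁ τ₁ ha₁] at this
    simp at this
  · -- C C
    obtain rfl : a₁ = a₂ := by
      have := hfun none
      rw [PsiC_none a₁ b₁ τ₁ hba₁, PsiC_none a₂ b₂ τ₂ hba₂] at this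
      simpa using this
    obtain rfl : b₁ = b₂ := by
      have := hfun (some a₁)
      rw [PsiC_some_a a₁ b₁ τ₁ ha₁, PsiC_some_a a₁ b₂ τ₂ ha₂] at this
      simpa using this
    obtain rfl : τ₁ = τ₂ :=
      Equiv.optionCongr_injective (mul_left_cancel (mul_left_cancel hval))
    rfl

end Master3

section Count

variable {α : Type*} [Fintype α] [DecidableEq α]

lemma nat_card_sigma {ι : Type*} [Fintype ι] (f : ι → Type*) [∀ i, Finite (f i)] :
    Nat.card (Σ i, f i) = ∑ i, Nat.card (f i) := by
  letI : ∀ i, Fintype (f i) := fun i => Fintype.ofFinite _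
  simp [Nat.card_eq_fintype_card]

lemma rf_def (m : ℕ) : restrictedFactorial m 3 = Nat.card {σ : Equiv.Perm (Fin m) // PP σ} := rfl

lemma card_fix_one (a : α) :
    Nat.card {τ : Equiv.Perm α // PP τ ∧ τ a = a} =
      Nat.card {σ : Equiv.Perm {x : α // x ≠ a} // PP σ} := by
  rw [← fix_card (fun x => x ≠ a)]
  refine Nat.card_congr (Equiv.subtypeEquivRight ?_)
  intro τ
  constructor
  · rintro ⟨h1, h2⟩
    exact ⟨h1, fun x hx => by rw [show x = a by simpa using hx]; exact h2⟩
  · rintro ⟨h1, h2⟩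
    exact ⟨h1, h2 a (by simp)⟩

lemma card_fix_two (a b : α) (hba : b ≠ a) :
    Nat.card {τ : Equiv.Perm α // PP τ ∧ τ a = a ∧ τ b = b} =
      Nat.card {σ : Equiv.Perm {x : α // x ≠ a ∧ x ≠ b} // PP σ} := by
  rw [← fix_card (fun x => x ≠ a ∧ x ≠ b)]
  refine Nat.card_congr (Equiv.subtypeEquivRight ?_)
  intro τ
  constructor
  · rintro ⟨h1, h2, h3⟩
    refine ⟨h1, fun x hx => ?_⟩
    rcases Decidable.not_and_iff_or_not.mp hx with hx | hx
    · rw [show x = a by simpa using hx]; exact h2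
    · rw [show x = b by simpa using hx]; exact h3
  · rintro ⟨h1, h2⟩
    exact ⟨h1, h2 a (by simp), h2 b (by simp)⟩

lemma key_count :
    Nat.card {σ : Equiv.Perm (Option α) // PP σ} =
      Nat.card {τ : Equiv.Perm α // PP τ} +
        (∑ a : α, Nat.card {τ : Equiv.Perm α // PP τ ∧ τ a = a} +
          ∑ a : α, ∑ b : {b : α // b ≠ a},
            Nat.card {τ : Equiv.Perm α // PP τ ∧ τ a = a ∧ τ b.1 = b.1}) := by
  rw [← Nat.card_eq_of_bijective Psi ⟨Psi_inj, Psi_surj⟩]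
  show Nat.card (_ ⊕ (_ ⊕ _)) = _
  rw [Nat.card_sum, Nat.card_sum, nat_card_sigma, nat_card_sigma]
  congr 2
  refine Finset.sum_congr rfl (fun a _ => ?_)
  rw [nat_card_sigma]

end Count

lemma card_ne_one (n : ℕ) (a : Fin (n + 2)) :
    Fintype.card {x : Fin (n + 2) // x ≠ a} = n + 1 := by
  rw [Fintype.card_subtype]
  rw [show Finset.univ.filter (fun x : Fin (n+2) => x ≠ a) = Finset.univ \ {a} by
    ext x; simp]
  rw [Finset.card_sdiff_of_subset (by simp), Finset.card_univ, Fintype.card_fin, Finset.card_singleton]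
  omega

lemma card_ne_two (n : ℕ) (a b : Fin (n + 2)) (hba : b ≠ a) :
    Fintype.card {x : Fin (n + 2) // x ≠ a ∧ x ≠ b} = n := by
  rw [Fintype.card_subtype]
  rw [show Finset.univ.filter (fun x : Fin (n+2) => x ≠ a ∧ x ≠ b) = Finset.univ \ {a, b} by
    ext x; simp [not_or]]
  rw [Finset.card_sdiff_of_subset (by simp), Finset.card_univ, Fintype.card_fin,
    Finset.card_pair (Ne.symm hba)]
  omega

theorem rf_rec (n : ℕ) :
    restrictedFactorial (n + 3) 3 =
      restrictedFactorial (n + 2) 3 + (n + 2) * restrictedFactorial (n + 1) 3 +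
        ((n + 2) * (n + 1)) * restrictedFactorial n 3 := by
  rw [rf_def (n + 3), N_congr (finSuccEquiv (n + 2)), key_count]
  have hB : ∀ a : Fin (n + 2),
      Nat.card {τ : Equiv.Perm (Fin (n + 2)) // PP τ ∧ τ a = a} =
        restrictedFactorial (n + 1) 3 := by
    intro a
    rw [card_fix_one a, N_congr (Fintype.equivFinOfCardEq (card_ne_one n a)), rf_def]
  have hC : ∀ (a : Fin (n + 2)) (b : {b : Fin (n + 2) // b ≠ a}),
      Nat.card {τ : Equiv.Perm (Fin (n + 2)) // PP τ ∧ τ a = a ∧ τ b.1 = b.1} =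
        restrictedFactorial n 3 := by
    intro a b
    rw [card_fix_two a b.1 b.2,
      N_congr (Fintype.equivFinOfCardEq (card_ne_two n a b.1 b.2)), rf_def]
  rw [Finset.sum_congr rfl (fun a _ => hB a),
      Finset.sum_congr rfl (fun a _ => Finset.sum_congr rfl (fun b _ => hC a b))]
  have h1 : ∀ a : Fin (n + 2),
      ∑ _b : {b : Fin (n + 2) // b ≠ a}, restrictedFactorial n 3 =
        (n + 1) * restrictedFactorial n 3 := by
    intro a
    rw [Finset.sum_const, Finset.card_univ, card_ne_one n a, smul_eq_mul]
  rw [Finset.sum_congr rfl (fun a _ => h1 a), ← rf_def]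
  simp only [Finset.sum_const, Finset.card_univ, Fintype.card_fin, smul_eq_mul]
  ring

lemma perm_isPeriodic {γ : Type*} [Fintype γ] (σ : Equiv.Perm γ) (x : γ) :
    IsPeriodicPt (⇑σ) (orderOf σ) x := by
  show (⇑σ)^[orderOf σ] x = x
  rw [Equiv.Perm.iterate_eq_pow, pow_orderOf_eq_one]
  rfl

lemma PP_of_orderOf_le {γ : Type*} [Fintype γ] (σ : Equiv.Perm γ) (h : orderOf σ ≤ 3) :
    PP σ := fun x =>
  le_trans (IsPeriodicPt.minimalPeriod_le (orderOf_pos σ) (perm_isPeriodic σ x)) h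

lemma rf_zero : restrictedFactorial 0 3 = 1 := by
  rw [rf_def, Nat.card_congr (Equiv.subtypeUnivEquiv (fun σ => PP_of_orderOf_le σ ?_)),
    Nat.card_eq_fintype_card, Fintype.card_perm]
  · simp
  · have : σ = 1 := by
      ext x
      exact x.elim0
    rw [this, orderOf_one]
    norm_num

lemma rf_one : restrictedFactorial 1 3 = 1 := by
  rw [rf_def, Nat.card_congr (Equiv.subtypeUnivEquiv (fun σ => PP_of_orderOf_le σ ?_)),
    Nat.card_eq_fintype_card, Fintype.card_perm]
  · simp
  · have : σ = 1 := by
      ext x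
      simp [Subsingleton.elim (σ x) x]
    rw [this, orderOf_one]
    norm_num

lemma rf_two : restrictedFactorial 2 3 = 2 := by
  rw [rf_def, Nat.card_congr (Equiv.subtypeUnivEquiv (fun σ => PP_of_orderOf_le σ ?_)),
    Nat.card_eq_fintype_card, Fintype.card_perm]
  · simp [Nat.factorial]
  · refine le_trans (Nat.le_of_dvd two_pos ?_) (by norm_num)
    have := orderOf_dvd_card (G := Equiv.Perm (Fin 2)) (x := σ)
    simpa [Fintype.card_perm] using this

lemma rf_three : restrictedFactorial 3 3 = 6 := by
  have := rf_rec 0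
  rw [rf_zero, rf_one, rf_two] at this
  simpa using this

lemma quad (q : ℕ) : ∃ a b c e : ℕ, Odd a ∧ Odd b ∧ Odd c ∧ Odd e ∧
    restrictedFactorial (4 * q) 3 = 2 ^ q * a ∧
    restrictedFactorial (4 * q + 1) 3 = 2 ^ q * b ∧
    restrictedFactorial (4 * q + 2) 3 = 2 ^ (q + 1) * c ∧
    restrictedFactorial (4 * q + 3) 3 = 2 ^ (q + 1) * e := by
  induction q with
  | zero =>
    refine ⟨1, 1, 1, 3, odd_one, odd_one, odd_one, by decide, ?_, ?_, ?_, ?_⟩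
    · simpa using rf_zero
    · simpa using rf_one
    · simpa using rf_two
    · simpa using rf_three
  | succ q ih =>
    obtain ⟨a, b, c, e, ha, hb, hc, he, h0, h1, h2, h3⟩ := ih
    set a' := e + (4*q+3)*c + ((4*q+3)*(2*q+1))*b with ha'
    set b' := a' + 4*(q+1)*(e + (4*q+3)*c) with hb'
    set c' := (2*q+3)*a' + 2*(q+1)*(e + (4*q+3)*c) + (2*(q+1)*(4*q+5))*e with hc'
    set e' := c' + (2*q+3)*b' + ((2*q+3)*(4*q+5))*a' with he'
    have R0 : restrictedFactorial (4 * (q+1)) 3 = 2 ^ (q+1) * a' := by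
      have hr := rf_rec (4*q+1)
      rw [show 4*q+1+3 = 4*(q+1) by ring, show 4*q+1+2 = 4*q+3 by ring,
        show 4*q+1+1 = 4*q+2 by ring, h3, h2, h1] at hr
      rw [hr, ha', pow_succ]
      ring
    have R1 : restrictedFactorial (4 * (q+1) + 1) 3 = 2 ^ (q+1) * b' := by
      have hr := rf_rec (4*q+2)
      rw [show 4*q+2+3 = 4*(q+1)+1 by ring, show 4*q+2+2 = 4*(q+1) by ring,
        show 4*q+2+1 = 4*q+3 by ring, R0, h3, h2] at hr
      rw [hr, hb', pow_succ]
      ring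
    have R2 : restrictedFactorial (4 * (q+1) + 2) 3 = 2 ^ (q+1+1) * c' := by
      have hr := rf_rec (4*q+3)
      rw [show 4*q+3+3 = 4*(q+1)+2 by ring, show 4*q+3+2 = 4*(q+1)+1 by ring,
        show 4*q+3+1 = 4*(q+1) by ring, R0, R1, h3] at hr
      rw [hr, hc', pow_succ, pow_succ]
      ring
    have R3 : restrictedFactorial (4 * (q+1) + 3) 3 = 2 ^ (q+1+1) * e' := by
      have hr := rf_rec (4*(q+1))
      rw [show 4*(q+1)+3 = 4*(q+1)+3 by ring, show 4*(q+1)+2 = 4*(q+1)+2 by ring,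
        show 4*(q+1)+1 = 4*(q+1)+1 by ring, R0, R1, R2] at hr
      rw [hr, he', pow_succ, pow_succ]
      ring
    obtain ⟨a₀, rfl⟩ := ha
    obtain ⟨b₀, rfl⟩ := hb
    obtain ⟨c₀, rfl⟩ := hc
    obtain ⟨e₀, rfl⟩ := he
    refine ⟨a', b', c', e', ?_, ?_, ?_, ?_, R0, R1, R2, R3⟩
    · exact ⟨e₀ + (4*q+3)*c₀ + (4*q+3)*(2*q+1)*b₀ + (4*q+3)*(q+1), by rw [ha']; ring⟩
    · exact ⟨(e₀ + (4*q+3)*c₀ + (4*q+3)*(2*q+1)*b₀ + (4*q+3)*(q+1)) +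
        2*(q+1)*((2*e₀+1) + (4*q+3)*(2*c₀+1)), by rw [hb', ha']; ring⟩
    · exact ⟨(2*q+3)*(e₀ + (4*q+3)*c₀ + (4*q+3)*(2*q+1)*b₀ + (4*q+3)*(q+1)) +
        2*(q+1)*(e₀ + (4*q+3)*c₀ + 2*q + 2) + (q+1)*(4*q+5)*(2*e₀+1) + q + 1,
        by rw [hc', ha']; ring⟩
    · refine ⟨?_, ?_⟩
      · exact ((2*q+3)*(e₀ + (4*q+3)*c₀ + (4*q+3)*(2*q+1)*b₀ + (4*q+3)*(q+1)) +
          2*(q+1)*(e₀ + (4*q+3)*c₀ + 2*q + 2) + (q+1)*(4*q+5)*(2*e₀+1) + q + 1) +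
          (2*q+3)*((e₀ + (4*q+3)*c₀ + (4*q+3)*(2*q+1)*b₀ + (4*q+3)*(q+1)) +
            2*(q+1)*((2*e₀+1) + (4*q+3)*(2*c₀+1))) +
          (2*q+3)*(4*q+5)*(e₀ + (4*q+3)*c₀ + (4*q+3)*(2*q+1)*b₀ + (4*q+3)*(q+1)) +
          (2*q+3)*(2*q+3)
      · rw [he', hc', hb', ha']
        ring

lemma pad_pow_mul_odd (q a : ℕ) (ha : Odd a) : padicValNat 2 (2 ^ q * a) = q := by
  obtain ⟨t, rfl⟩ := ha
  rw [padicValNat.mul (by positivity) (by omega), padicValNat.prime_pow,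
    padicValNat.eq_zero_of_not_dvd (by omega)]
  omega


/-- The 2-adic valuation of the restricted factorial numbers `A_{n,≤3}` for `n ≥ 1`:
it equals `k` when `n = 4k` or `n = 4k+1`, and `k+1` when `n = 4k+2` or `n = 4k+3`. -/
theorem padicValNat_two_restrictedFactorial_three (n k : ℕ) (hn : 1 ≤ n) :
    (n = 4 * k → padicValNat 2 (restrictedFactorial n 3) = k) ∧
    (n = 4 * k + 1 → padicValNat 2 (restrictedFactorial n 3) = k) ∧
    (n = 4 * k + 2 → padicValNat 2 (restrictedFactorial n 3) = k + 1) ∧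
    (n = 4 * k + 3 → padicValNat 2 (restrictedFactorial n 3) = k + 1) := by

  obtain ⟨a, b, c, e, ha, hb, hc, he, h0, h1, h2, h3⟩ := quad k
  refine ⟨fun h => ?_, fun h => ?_, fun h => ?_, fun h => ?_⟩
  · rw [h, h0, pad_pow_mul_odd _ _ ha]
  · rw [h, h1, pad_pow_mul_odd _ _ hb]
  · rw [h, h2, pad_pow_mul_odd _ _ hc]
  · rw [h, h3, pad_pow_mul_odd _ _ he]
end
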